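/- arXiv:2112.09228 — 7 statements merged into one kernel-verified Lean document; each statement's English description precedes it below -/
import Mathlib

section
/- For every integer k ≥ 2, the number of packed increasing tableaux of rectangular shape 3×k with maximum entry exactly 3+k equals the number of standard Young tableaux of the 'toothbrush' shape (2,2,2,1^{k−2}). -/
open Polynomial

/-- An increasing tableau of rectangular shape `a × b` (cells indexed from 0) with
entries in `{1, …, m}`, strictly increasing along rows and columns, and normalized
to be `0` outside the shape. -/
def IsInc (a b m : ℕ) (T : ℕ → ℕ → ℕ) : Prop :=
  (∀ i j, i < a → j < b → 1 ≤ T i j ∧ T i j ≤ m) ∧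
  (∀ i j j', i < a → j < j' → j' < b → T i j < T i j') ∧
  (∀ i i' j, i < i' → i' < a → j < b → T i j < T i' j) ∧
  (∀ i j, ¬(i < a ∧ j < b) → T i j = 0)

/-- The tableau is packed with maximum entry exactly `m`:
every value `1, …, m` appears. -/
def IsPacked (a b m : ℕ) (T : ℕ → ℕ → ℕ) : Prop :=
  ∀ v, 1 ≤ v → v ≤ m → ∃ i j, i < a ∧ j < b ∧ T i j = v

/-- The minimal label among the (at most two) filled southeast neighbors of cell
`(i,j)` in a partial filling `F` (`0` denotes an empty cell); `0` if there is no
filled southeast neighbor. -/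
def seMin (a b : ℕ) (F : ℕ → ℕ → ℕ) (i j : ℕ) : ℕ :=
  let s := if i + 1 < a then F (i + 1) j else 0
  let e := if j + 1 < b then F i (j + 1) else 0
  if s = 0 then e else if e = 0 then s else min s e

/-- One simultaneous K-jeu-de-taquin sliding step: every empty cell takes the
minimal label of its filled southeast neighbors, and that label is erased from
each southeast neighbor in which it appears. -/
def kStep (a b : ℕ) (F : ℕ → ℕ → ℕ) : ℕ → ℕ → ℕ := fun i j =>
  if i < a ∧ j < b then
    if F i j = 0 then seMin a b F i j
    else if (0 < i ∧ F (i - 1) j = 0 ∧ seMin a b F (i - 1) j = F i j) ∨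
            (0 < j ∧ F i (j - 1) = 0 ∧ seMin a b F i (j - 1) = F i j) then 0
    else F i j
  else 0

/-- K-promotion on increasing tableaux of rectangular shape `a × b` with entries
at most `m`: delete the entry `1`, slide repeatedly (for a rectangle, `a + b`
steps more than suffice for the process to stabilize), fill empty cells with
`m + 1`, and subtract `1` from every entry. -/
def KPro (a b m : ℕ) (T : ℕ → ℕ → ℕ) : ℕ → ℕ → ℕ := fun i j =>
  if i < a ∧ j < b then
    let G := (kStep a b)^[a + b]
      (fun i' j' => if i' < a ∧ j' < b then (if T i' j' = 1 then 0 else T i' j') else 0)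
    if G i j = 0 then m else G i j - 1
  else 0

/-- `p` is a cell of the product-of-chains poset `[a] × [b]` (indexed from 0). -/
def IsCell (a b : ℕ) (p : ℕ × ℕ) : Prop := p.1 < a ∧ p.2 < b

/-- `I` is an order ideal (downward-closed subset) of the poset `[a] × [b]`. -/
def IsIdeal (a b : ℕ) (I : Set (ℕ × ℕ)) : Prop :=
  (∀ p ∈ I, IsCell a b p) ∧ ∀ p q : ℕ × ℕ, q ∈ I → p ≤ q → p ∈ I

/-- `S` is an upper set (order filter, upward-closed subset) of the poset `[a] × [b]`. -/
def IsUpper (a b : ℕ) (S : Set (ℕ × ℕ)) : Prop :=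
  (∀ p ∈ S, IsCell a b p) ∧ ∀ p q : ℕ × ℕ, p ∈ S → IsCell a b q → p ≤ q → q ∈ S

/-- Rowmotion on order ideals of `[a] × [b]`: `I` is sent to the order ideal
generated by the minimal elements of the complement of `I`. -/
def Row (a b : ℕ) (I : Set (ℕ × ℕ)) : Set (ℕ × ℕ) :=
  {p | ∃ q, (IsCell a b q ∧ q ∉ I) ∧
        (∀ r, IsCell a b r → r ∉ I → r ≤ q → r = q) ∧ p ≤ q}

/-- The staircase order ideal `S_r = {(i,j) : i + j < r}` of `[a] × [b]`
(0-indexed; with 1-based coordinates this is `i + j - 2 < r`). -/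
def Stair (a b r : ℕ) : Set (ℕ × ℕ) :=
  {p | IsCell a b p ∧ p.1 + p.2 < r}

/-- The q-integer `[n]_q = 1 + q + ⋯ + q^(n-1)` as a polynomial in `ℤ[q]`. -/
noncomputable def qnat (n : ℕ) : Polynomial ℤ := ∑ i ∈ Finset.range n, X ^ i

/-- The q-factorial `[n]_q! = [n]_q [n-1]_q ⋯ [1]_q`. -/
noncomputable def qfact (n : ℕ) : Polynomial ℤ := ∏ i ∈ Finset.range n, qnat (i + 1)

/-- `p` is a cell of the toothbrush shape `(2,2,2,1^(k-2))` (cells indexed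
from 0): three rows of length 2 followed by `k - 2` rows of length 1. -/
def TCell (k : ℕ) (p : ℕ × ℕ) : Prop :=
  (p.1 < 3 ∧ p.2 < 2) ∨ (p.1 < k + 1 ∧ p.2 = 0)

/-- A standard Young tableau of toothbrush shape `(2,2,2,1^(k-2))`: a bijective
filling of the `k + 4` cells by the values `1, …, k + 4`, strictly increasing
along rows and columns, normalized to be `0` outside the shape. -/
def IsToothSYT (k : ℕ) (T : ℕ × ℕ → ℕ) : Prop :=
  Set.BijOn T {p | TCell k p} (Set.Icc 1 (k + 4)) ∧
  (∀ i j j', j < j' → TCell k (i, j) → TCell k (i, j') → T (i, j) < T (i, j')) ∧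
  (∀ i i' j, i < i' → TCell k (i, j) → TCell k (i', j) → T (i, j) < T (i', j)) ∧
  (∀ p, ¬ TCell k p → T p = 0)

/-- The map `Θ` sending an increasing tableau `T ∈ Inc^(a+b)(a × b)` to the
order ideal `{(a-i+1, b-j+1) : T(i,j) = i+j}` of `[a] × [b]` (written here with
0-indexed cells and the corresponding entry condition `T i j = i + j + 2`). -/
def theta (a b : ℕ) (T : ℕ → ℕ → ℕ) : Set (ℕ × ℕ) :=
  {p | ∃ i j, i < a ∧ j < b ∧ T i j = i + j + 2 ∧ p = (a - 1 - i, b - 1 - j)}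

open Finset

def cmp3 (c : ℕ×ℕ×ℕ) : ℕ → ℕ := fun i => match i with
  | 0 => c.1
  | 1 => c.2.1
  | _ => c.2.2

def TAux (k : ℕ) (c : ℕ×ℕ×ℕ) : ℕ → ℕ → ℕ := fun i j =>
  if i < 3 ∧ j < k then (if j < cmp3 c i then i+j+1 else i+j+2) else 0

lemma TAux_pos (k : ℕ) (c : ℕ×ℕ×ℕ) (i j : ℕ) (hi : i < 3) (hj : j < k) :
    TAux k c i j = if j < cmp3 c i then i+j+1 else i+j+2 := if_pos ⟨hi, hj⟩

lemma TAux_neg (k : ℕ) (c : ℕ×ℕ×ℕ) (i j : ℕ) (hij : ¬(i < 3 ∧ j < k)) :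
    TAux k c i j = 0 := if_neg hij

def MonoF (k : ℕ) : Finset (ℕ×ℕ×ℕ) :=
  ((range (k+1)) ×ˢ (range (k+1)) ×ˢ (range (k+1))).filter
    (fun c => c.2.2 ≤ c.2.1 ∧ c.2.1 ≤ c.1)

def clampT (k t : ℕ) : ℕ×ℕ×ℕ := (t - (t-k), (t-1) - (t-1-k), (t-2) - (t-2-k))

def BadLF (k : ℕ) : Finset (ℕ×ℕ×ℕ) := (range (k+3)).image (clampT k)

def StrictF (k : ℕ) : Finset (ℕ×ℕ×ℕ) :=
  ((range (k+5)) ×ˢ (range (k+5)) ×ˢ (range (k+5))).filter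
    (fun c => 2 ≤ c.1 ∧ c.1 < c.2.1 ∧ c.2.1 < c.2.2 ∧ c.2.2 ≤ k+4)

def badR (k t : ℕ) : ℕ×ℕ×ℕ := if t ≤ k then (2,3,t+4) else if t = k+1 then (2,4,5) else (3,4,5)

def BadRF (k : ℕ) : Finset (ℕ×ℕ×ℕ) := (range (k+3)).image (badR k)

def RfinF (k : ℕ) : Finset (ℕ×ℕ×ℕ) := (StrictF k).filter (fun c => 4 ≤ c.2.1 ∧ 6 ≤ c.2.2)

lemma card_BadLF (k : ℕ) (hk : 2 ≤ k) : (BadLF k).card = k+3 := by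
  rw [BadLF, Finset.card_image_of_injOn, card_range]
  intro a ha b hb hab
  simp only [mem_coe, mem_range] at ha hb
  rw [clampT, clampT, Prod.mk.injEq, Prod.mk.injEq] at hab
  omega

lemma card_BadRF (k : ℕ) : (BadRF k).card = k+3 := by
  rw [BadRF, Finset.card_image_of_injOn, card_range]
  intro a ha b hb hab
  simp only [mem_coe, mem_range] at ha hb
  simp only [badR] at hab
  split_ifs at hab <;> simp only [Prod.mk.injEq] at hab <;> omega

lemma BadLF_subset (k : ℕ) : BadLF k ⊆ MonoF k := by
  intro c hc
  simp only [BadLF, mem_image, mem_range] at hc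
  obtain ⟨t, ht, rfl⟩ := hc
  simp only [MonoF, mem_filter, mem_product, mem_range, clampT]
  omega

lemma BadRF_subset (k : ℕ) (hk : 2 ≤ k) : BadRF k ⊆ StrictF k := by
  intro c hc
  simp only [BadRF, mem_image, mem_range] at hc
  obtain ⟨t, ht, rfl⟩ := hc
  simp only [StrictF, mem_filter, mem_product, mem_range, badR]
  split_ifs <;> simp only [] <;> omega

lemma card_MonoF (k : ℕ) : (MonoF k).card = (StrictF k).card := by
  apply Finset.card_bij (fun c _ => (c.2.2+2, c.2.1+3, c.1+4))
  · intro c hc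
    simp only [MonoF, mem_filter, mem_product, mem_range] at hc
    simp only [StrictF, mem_filter, mem_product, mem_range]
    omega
  · intro a _ b _ hab
    simp only [Prod.mk.injEq] at hab
    obtain ⟨a1,a2,a3⟩ := a; obtain ⟨b1,b2,b3⟩ := b
    simp_all only [Prod.mk.injEq]
    omega
  · rintro ⟨x,y,z⟩ hc
    simp only [StrictF, mem_filter, mem_product, mem_range] at hc
    refine ⟨(z-4, y-3, x-2), ?_, ?_⟩
    · simp only [MonoF, mem_filter, mem_product, mem_range]; omega
    · simp only [Prod.mk.injEq]; omega

lemma RfinF_eq (k : ℕ) (hk : 2 ≤ k) : RfinF k = StrictF k \ BadRF k := by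
  ext ⟨x,y,z⟩
  simp only [RfinF, mem_filter, mem_sdiff, BadRF, mem_image, mem_range, StrictF,
    mem_product, mem_range]
  constructor
  · rintro ⟨hs, h4, h6⟩
    refine ⟨hs, ?_⟩
    rintro ⟨t, ht, heq⟩
    simp only [badR] at heq
    split_ifs at heq <;> simp only [Prod.mk.injEq] at heq <;> omega
  · rintro ⟨hs, hb⟩
    refine ⟨hs, ?_, ?_⟩
    obtain ⟨-, hs⟩ := hs
    · by_contra h4
      exact hb ⟨z - 4, by omega, by
        simp only [badR, if_pos (by omega : z - 4 ≤ k), Prod.mk.injEq]; omega⟩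
    · by_contra h6
      by_cases h4 : 4 ≤ y
      · by_cases hx : x = 2
        · exact hb ⟨k+1, by omega, by
            simp only [badR, if_neg (by omega : ¬ k+1 ≤ k), if_pos rfl, if_true, Prod.mk.injEq]; omega⟩
        · exact hb ⟨k+2, by omega, by
            simp only [badR, if_neg (by omega : ¬ k+2 ≤ k), if_neg (by omega : ¬ k+2 = k+1),
              Prod.mk.injEq]; omega⟩
      · exact hb ⟨z - 4, by omega, by
          simp only [badR, if_pos (by omega : z - 4 ≤ k), Prod.mk.injEq]; omega⟩

def packedP (k : ℕ) (c : ℕ×ℕ×ℕ) : Prop := ∀ v ∈ Finset.Icc 1 (k+3), ∃ i < 3, ∃ j < k, TAux k c i j = v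

noncomputable def LfinF (k : ℕ) : Finset (ℕ×ℕ×ℕ) :=
  @Finset.filter _ (packedP k) (Classical.decPred _) (MonoF k)

-- clamp triple is not packed
lemma clamp_not_packed (k t : ℕ) (hk : 2 ≤ k) (ht : t < k+3) : ¬ packedP k (clampT k t) := by
  intro hp
  obtain ⟨i, hi, j, hj, he⟩ := hp (t+1) (by simp; omega)
  interval_cases i <;>
    simp only [TAux, cmp3, clampT, if_pos (by omega : (0:ℕ) < 3 ∧ j < k),
      if_pos (by omega : (1:ℕ) < 3 ∧ j < k), if_pos (by omega : (2:ℕ) < 3 ∧ j < k)] at he <;>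
    split_ifs at he <;> omega

-- not packed implies clamp
lemma missing_clamp (k c0 c1 c2 v : ℕ) (hk : 2 ≤ k) (hb2 : c2 ≤ c1) (hb1 : c1 ≤ c0)
    (hb0 : c0 ≤ k) (hv1 : 1 ≤ v) (hv2 : v ≤ k+3)
    (hmiss : ∀ i < 3, ∀ j < k, TAux k (c0,c1,c2) i j ≠ v) :
    (c0, c1, c2) = clampT k (v-1) := by
  have ent : ∀ i < 3, ∀ j < k, TAux k (c0,c1,c2) i j
      = if j < cmp3 (c0,c1,c2) i then i+j+1 else i+j+2 := by
    intro i hi j hj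
    simp only [TAux, if_pos (And.intro hi hj)]
  have h0a : v ≤ k → c0 ≤ v-1 := by
    intro hvk
    by_contra h
    exact hmiss 0 (by omega) (v-1) (by omega)
      (by rw [ent 0 (by omega) (v-1) (by omega)]; simp only [cmp3]; rw [if_pos (by omega)]; omega)
  have h0b : 2 ≤ v → v-2 < k → v-2 < c0 := by
    intro h1 h2
    by_contra h
    exact hmiss 0 (by omega) (v-2) (by omega)
      (by rw [ent 0 (by omega) (v-2) (by omega)]; simp only [cmp3]; rw [if_neg (by omega)]; omega)
  have h1a : 2 ≤ v → v-2 < k → c1 ≤ v-2 := by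
    intro h1 h2
    by_contra h
    exact hmiss 1 (by omega) (v-2) (by omega)
      (by rw [ent 1 (by omega) (v-2) (by omega)]; simp only [cmp3]; rw [if_pos (by omega)]; omega)
  have h1b : 3 ≤ v → v-3 < k → v-3 < c1 := by
    intro h1 h2
    by_contra h
    exact hmiss 1 (by omega) (v-3) (by omega)
      (by rw [ent 1 (by omega) (v-3) (by omega)]; simp only [cmp3]; rw [if_neg (by omega)]; omega)
  have h2a : 3 ≤ v → v-3 < k → c2 ≤ v-3 := by
    intro h1 h2
    by_contra h
    exact hmiss 2 (by omega) (v-3) (by omega)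
      (by rw [ent 2 (by omega) (v-3) (by omega)]; simp only [cmp3]; rw [if_pos (by omega)]; omega)
  have h2b : 4 ≤ v → v-4 < k → v-4 < c2 := by
    intro h1 h2
    by_contra h
    exact hmiss 2 (by omega) (v-4) (by omega)
      (by rw [ent 2 (by omega) (v-4) (by omega)]; simp only [cmp3]; rw [if_neg (by omega)]; omega)
  simp only [clampT, Prod.mk.injEq]
  omega

lemma LfinF_eq (k : ℕ) (hk : 2 ≤ k) : LfinF k = MonoF k \ BadLF k := by
  ext ⟨c0, c1, c2⟩
  simp only [LfinF, mem_filter, mem_sdiff, BadLF, mem_image, mem_range]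
  constructor
  · rintro ⟨hm, hp⟩
    refine ⟨hm, ?_⟩
    rintro ⟨t, ht, heq⟩
    exact clamp_not_packed k t hk ht (heq ▸ hp)
  · rintro ⟨hm, hb⟩
    refine ⟨hm, ?_⟩
    intro v hv
    simp only [Finset.mem_Icc] at hv
    by_contra hmiss
    push_neg at hmiss
    simp only [MonoF, mem_filter, mem_product, mem_range] at hm
    exact hb ⟨v-1, by omega, (missing_clamp k c0 c1 c2 v hk hm.2.1 hm.2.2 (by omega)
      hv.1 hv.2 hmiss).symm⟩

lemma card_LfinF (k : ℕ) (hk : 2 ≤ k) : (LfinF k).card = (RfinF k).card := by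
  rw [LfinF_eq k hk, RfinF_eq k hk, Finset.card_sdiff_of_subset (BadLF_subset k),
    Finset.card_sdiff_of_subset (BadRF_subset k hk), card_BadLF k hk, card_BadRF, card_MonoF]


lemma entry_bounds (k : ℕ) (T : ℕ → ℕ → ℕ) (hI : IsInc 3 k (3+k) T) :
    ∀ i < 3, ∀ j < k, i+j+1 ≤ T i j ∧ T i j ≤ i+j+2 := by
  obtain ⟨hbnd, hrow, hcol, hz⟩ := hI
  have low0 : ∀ j, j < k → j+1 ≤ T 0 j := by
    intro j
    induction j with
    | zero => intro hj; exact (hbnd 0 0 (by omega) hj).1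
    | succ n ih =>
      intro hj
      have h1 := hrow 0 n (n+1) (by omega) (by omega) hj
      have h2 := ih (by omega)
      omega
  have low1 : ∀ j, j < k → j+2 ≤ T 1 j := by
    intro j hj
    have := hcol 0 1 j (by omega) (by omega) hj
    have := low0 j hj
    omega
  have low2 : ∀ j, j < k → j+3 ≤ T 2 j := by
    intro j hj
    have := hcol 1 2 j (by omega) (by omega) hj
    have := low1 j hj
    omega
  have up2 : ∀ d j, j < k → k - 1 - j = d → T 2 j ≤ j+4 := by
    intro d
    induction d with
    | zero =>
      intro j hj hd
      have := (hbnd 2 j (by omega) hj).2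
      omega
    | succ n ih =>
      intro j hj hd
      have h1 := hrow 2 j (j+1) (by omega) (by omega) (by omega)
      have h2 := ih (j+1) (by omega) (by omega)
      omega
  have up1 : ∀ j, j < k → T 1 j ≤ j+3 := by
    intro j hj
    have := hcol 1 2 j (by omega) (by omega) hj
    have := up2 (k-1-j) j hj rfl
    omega
  have up0 : ∀ j, j < k → T 0 j ≤ j+2 := by
    intro j hj
    have := hcol 0 1 j (by omega) (by omega) hj
    have := up1 j hj
    omega
  intro i hi j hj
  interval_cases i
  · have := low0 j hj; have := up0 j hj; omega
  · have := low1 j hj; have := up1 j hj; omega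
  · have := low2 j hj; have := up2 (k-1-j) j hj rfl; omega

lemma exists_threshold (k : ℕ) (T : ℕ → ℕ → ℕ) (hI : IsInc 3 k (3+k) T) :
    ∀ i < 3, ∃ ci ≤ k, ∀ j < k, (j < ci ↔ T i j = i+j+1) := by
  have hb := entry_bounds k T hI
  obtain ⟨hbnd, hrow, hcol, hz⟩ := hI
  intro i hi
  -- up-closure of the big-entry property
  have upcl : ∀ d jj, jj < k → T i jj = i+jj+2 → jj+d < k → T i (jj+d) = i+(jj+d)+2 := by
    intro d
    induction d with
    | zero => intro jj _ h _; simpa using h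
    | succ n ih =>
      intro jj hjj h hd
      have h1 := ih jj hjj h (by omega)
      have h2 := hrow i (jj+n) (jj+n+1) hi (by omega) (by omega)
      have h3 := (hb i hi (jj+n+1) (by omega)).2
      have h4 : T i (jj + (n+1)) = T i (jj + n + 1) := rfl
      omega
  by_cases h : ∃ j, j < k ∧ T i j = i+j+2
  · refine ⟨Nat.find h, ?_, ?_⟩
    · obtain ⟨hlt, _⟩ := Nat.find_spec h; omega
    · intro j hj
      constructor
      · intro hjf
        have h3 := Nat.find_min h hjf
        push_neg at h3
        have h4 := h3 hj
        have h5 := hb i hi j hj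
        omega
      · intro he
        by_contra hge
        push_neg at hge
        obtain ⟨hfk, hfe⟩ := Nat.find_spec h
        have := upcl (j - Nat.find h) (Nat.find h) hfk hfe (by omega)
        have hjj : Nat.find h + (j - Nat.find h) = j := by omega
        rw [hjj] at this
        omega
  · push_neg at h
    refine ⟨k, le_refl k, fun j hj => ⟨fun _ => ?_, fun _ => hj⟩⟩
    have := h j hj
    have := hb i hi j hj
    omega

lemma exists_triple (k : ℕ) (T : ℕ → ℕ → ℕ) (hI : IsInc 3 k (3+k) T) :
    ∃ c ∈ MonoF k, TAux k c = T := by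
  have hb := entry_bounds k T hI
  have ht := exists_threshold k T hI
  obtain ⟨c0, hc0, h0⟩ := ht 0 (by omega)
  obtain ⟨c1, hc1, h1⟩ := ht 1 (by omega)
  obtain ⟨c2, hc2, h2⟩ := ht 2 (by omega)
  obtain ⟨hbnd, hrow, hcol, hz⟩ := hI
  have m10 : c1 ≤ c0 := by
    by_contra hcc
    push_neg at hcc
    have hj : c0 < k := by omega
    have e1 : T 1 c0 = 1 + c0 + 1 := (h1 c0 hj).mp (by omega)
    have e0 : T 0 c0 ≠ 0 + c0 + 1 := fun he => by have := (h0 c0 hj).mpr he; omega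
    have := hcol 0 1 c0 (by omega) (by omega) hj
    have := hb 0 (by omega) c0 hj
    omega
  have m21 : c2 ≤ c1 := by
    by_contra hcc
    push_neg at hcc
    have hj : c1 < k := by omega
    have e2 : T 2 c1 = 2 + c1 + 1 := (h2 c1 hj).mp (by omega)
    have e1 : T 1 c1 ≠ 1 + c1 + 1 := fun he => by have := (h1 c1 hj).mpr he; omega
    have := hcol 1 2 c1 (by omega) (by omega) hj
    have := hb 1 (by omega) c1 hj
    omega
  refine ⟨(c0, c1, c2), ?_, ?_⟩
  · simp only [MonoF, mem_filter, mem_product, mem_range]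
    exact ⟨⟨by omega, by omega, by omega⟩, m21, m10⟩
  · funext i j
    by_cases hij : i < 3 ∧ j < k
    · obtain ⟨hi, hj⟩ := hij
      have key : ∀ cc, (∀ jj < k, (jj < cc ↔ T i jj = i+jj+1)) →
          (if j < cc then i+j+1 else i+j+2) = T i j := by
        intro cc hcc
        split_ifs with hlt
        · exact ((hcc j hj).mp hlt).symm
        · have h4 : T i j ≠ i+j+1 := fun he => hlt ((hcc j hj).mpr he)
          have := hb i hi j hj
          omega
      rw [TAux_pos k _ i j hi hj]
      interval_cases i
      · exact key c0 h0
      · exact key c1 h1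
      · exact key c2 h2
    · rw [TAux_neg k _ i j hij]
      exact (hz i j hij).symm

lemma TAux_isInc (k : ℕ) (c : ℕ×ℕ×ℕ) (hc : c ∈ MonoF k) : IsInc 3 k (3+k) (TAux k c) := by
  obtain ⟨c0, c1, c2⟩ := c
  simp only [MonoF, mem_filter, mem_product, mem_range] at hc
  obtain ⟨⟨b0, b1, b2⟩, m2, m1⟩ := hc
  refine ⟨?_, ?_, ?_, ?_⟩
  · intro i j hi hj
    rw [TAux_pos k _ i j hi hj]
    interval_cases i <;> simp only [cmp3] <;> split_ifs <;> omega
  · intro i j j' hi hjj hj'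
    rw [TAux_pos k _ i j hi (by omega), TAux_pos k _ i j' hi hj']
    interval_cases i <;> simp only [cmp3] <;> split_ifs <;> omega
  · intro i i' j hii hi' hj
    rw [TAux_pos k _ i j (by omega) hj, TAux_pos k _ i' j hi' hj]
    interval_cases i' <;> interval_cases i <;> simp only [cmp3] <;> split_ifs <;> omega
  · intro i j hij
    exact TAux_neg k _ i j hij

lemma setL_eq (k : ℕ) :
    {T : ℕ → ℕ → ℕ | IsInc 3 k (3+k) T ∧ IsPacked 3 k (3+k) T} = TAux k '' ↑(LfinF k) := by
  ext T
  simp only [Set.mem_setOf_eq, Set.mem_image, mem_coe]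
  constructor
  · rintro ⟨hI, hP⟩
    obtain ⟨c, hcm, hct⟩ := exists_triple k T hI
    refine ⟨c, ?_, hct⟩
    simp only [LfinF, mem_filter]
    refine ⟨hcm, ?_⟩
    intro v hv
    simp only [Finset.mem_Icc] at hv
    obtain ⟨i, j, hi, hj, he⟩ := hP v hv.1 (by omega)
    exact ⟨i, hi, j, hj, by rw [hct]; exact he⟩
  · rintro ⟨c, hc, rfl⟩
    simp only [LfinF, mem_filter] at hc
    obtain ⟨hcm, hp⟩ := hc
    refine ⟨TAux_isInc k c hcm, ?_⟩
    intro v hv1 hv2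
    obtain ⟨i, hi, j, hj, he⟩ := hp v (by simp only [Finset.mem_Icc]; omega)
    exact ⟨i, j, hi, hj, he⟩

lemma TAux_inj_aux (k : ℕ) (c c' : ℕ×ℕ×ℕ) (i : ℕ) (hi : i < 3) (hik : cmp3 c' i ≤ k)
    (h : TAux k c = TAux k c') (hlt : cmp3 c i < cmp3 c' i) : False := by
  have hjk : cmp3 c i < k := by omega
  have e := congrFun (congrFun h i) (cmp3 c i)
  rw [TAux_pos k c i _ hi hjk, TAux_pos k c' i _ hi hjk, if_neg (lt_irrefl _),
    if_pos hlt] at e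
  omega

lemma TAux_injOn (k : ℕ) : Set.InjOn (TAux k) ↑(LfinF k) := by
  intro c hc c' hc' h
  simp only [mem_coe, LfinF, mem_filter, MonoF, mem_product, mem_range] at hc hc'
  obtain ⟨⟨⟨b0, b1, b2⟩, _, _⟩, _⟩ := hc
  obtain ⟨⟨⟨b0', b1', b2'⟩, _, _⟩, _⟩ := hc'
  have hbc : ∀ i < 3, cmp3 c i ≤ k := by
    intro i hi; interval_cases i <;> simp only [cmp3] <;> omega
  have hbc' : ∀ i < 3, cmp3 c' i ≤ k := by
    intro i hi; interval_cases i <;> simp only [cmp3] <;> omega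
  have key : ∀ i < 3, cmp3 c i = cmp3 c' i := by
    intro i hi
    rcases Nat.lt_trichotomy (cmp3 c i) (cmp3 c' i) with hlt | heq | hgt
    · exact absurd (TAux_inj_aux k c c' i hi (hbc' i hi) h hlt) not_false
    · exact heq
    · exact absurd (TAux_inj_aux k c' c i hi (hbc i hi) h.symm hgt) not_false
  have k0 := key 0 (by omega)
  have k1 := key 1 (by omega)
  have k2 := key 2 (by omega)
  simp only [cmp3] at k0 k1 k2
  obtain ⟨x, y, z⟩ := c
  obtain ⟨x', y', z'⟩ := c'
  simp only [Prod.mk.injEq]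
  exact ⟨k0, k1, k2⟩

lemma ncard_setL (k : ℕ) :
    {T : ℕ → ℕ → ℕ | IsInc 3 k (3+k) T ∧ IsPacked 3 k (3+k) T}.ncard = (LfinF k).card := by
  rw [setL_eq k, Set.ncard_image_of_injOn (TAux_injOn k), Set.ncard_coe_finset]


def fskip (x y z i : ℕ) : ℕ :=
  if i+1 < x then i+1 else if i+2 < y then i+2 else if i+3 < z then i+3 else i+4

def Sof (k : ℕ) (c : ℕ×ℕ×ℕ) : ℕ×ℕ → ℕ := fun p =>
  if p.1 < 3 ∧ p.2 = 1 then cmp3 c p.1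
  else if p.1 < k+1 ∧ p.2 = 0 then fskip c.1 c.2.1 c.2.2 p.1 else 0

section fs
variable {k x y z : ℕ}

lemma fs_mono (hxy : x < y) (hyz : y < z) {i i' : ℕ} (h : i < i') :
    fskip x y z i < fskip x y z i' := by
  unfold fskip; split_ifs <;> omega

lemma fs_ne (hxy : x < y) (hyz : y < z) (i : ℕ) : fskip x y z i ≠ x ∧ fskip x y z i ≠ y ∧ fskip x y z i ≠ z := by
  unfold fskip; split_ifs <;> omega

lemma fs_bounds (hz : z ≤ k+4) (i : ℕ) (hi : i < k+1) :
    1 ≤ fskip x y z i ∧ fskip x y z i ≤ k+4 := by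
  unfold fskip; split_ifs <;> omega

lemma fs_surj (hxy : x < y) (hyz : y < z) (hx : 2 ≤ x) (hz : z ≤ k+4) (v : ℕ) (hv1 : 1 ≤ v) (hv2 : v ≤ k+4)
    (hvx : v ≠ x) (hvy : v ≠ y) (hvz : v ≠ z) : ∃ i, i < k+1 ∧ fskip x y z i = v := by
  by_cases h1 : v < x
  · exact ⟨v-1, by omega, by unfold fskip; split_ifs <;> omega⟩
  by_cases h2 : v < y
  · exact ⟨v-2, by omega, by unfold fskip; split_ifs <;> omega⟩
  by_cases h3 : v < z
  · exact ⟨v-3, by omega, by unfold fskip; split_ifs <;> omega⟩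
  · exact ⟨v-4, by omega, by unfold fskip; split_ifs <;> omega⟩

lemma fs_gap (hxy : x < y) (hyz : y < z) (i w : ℕ) (hw1 : fskip x y z i < w) (hw2 : w < fskip x y z (i+1)) :
    w = x ∨ w = y ∨ w = z := by
  unfold fskip at hw1 hw2; split_ifs at hw1 hw2 <;> omega
end fs

lemma Sof_col1 (k x y z i : ℕ) (hi : i < 3) : Sof k (x,y,z) (i,1) = cmp3 (x,y,z) i :=
  if_pos ⟨hi, rfl⟩

lemma Sof_col0 (k x y z i : ℕ) (hi : i < k+1) : Sof k (x,y,z) (i,0) = fskip x y z i := by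
  unfold Sof
  rw [if_neg (by simp), if_pos ⟨hi, rfl⟩]

lemma mem_RfinF (k x y z : ℕ) : (x,y,z) ∈ RfinF k ↔
    2 ≤ x ∧ x < y ∧ y < z ∧ z ≤ k+4 ∧ 4 ≤ y ∧ 6 ≤ z := by
  simp only [RfinF, StrictF, mem_filter, mem_product, mem_range]
  constructor
  · rintro ⟨⟨_, h⟩, h'⟩; exact ⟨h.1, h.2.1, h.2.2.1, h.2.2.2, h'⟩
  · rintro ⟨h1, h2, h3, h4, h5, h6⟩
    exact ⟨⟨⟨by omega, by omega, by omega⟩, h1, h2, h3, h4⟩, h5, h6⟩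

lemma Sof_isTooth (k : ℕ) (hk : 2 ≤ k) (x y z : ℕ) (hc : (x,y,z) ∈ RfinF k) :
    IsToothSYT k (Sof k (x,y,z)) := by
  rw [mem_RfinF] at hc
  obtain ⟨hx, hxy, hyz, hzk, hy4, hz6⟩ := hc
  refine ⟨⟨?_, ?_, ?_⟩, ?_, ?_, ?_⟩
  · -- MapsTo
    rintro ⟨i, j⟩ hp
    rcases hp with ⟨hi, hj⟩ | ⟨hi, hj⟩
    · interval_cases j
      · rw [Sof_col0 k x y z i (by omega)]
        have := fs_bounds (x := x) (y := y) hzk i (by omega)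
        simp only [Set.mem_Icc]; omega
      · rw [Sof_col1 k x y z i hi]
        interval_cases i <;> simp only [cmp3, Set.mem_Icc] <;> omega
    · subst hj
      rw [Sof_col0 k x y z i hi]
      have := fs_bounds (x := x) (y := y) hzk i hi
      simp only [Set.mem_Icc]; omega
  · -- InjOn
    rintro ⟨i, j⟩ hp ⟨i', j'⟩ hq he
    have hcell : ∀ a b : ℕ, TCell k (a, b) → (b = 0 ∧ a < k+1) ∨ (b = 1 ∧ a < 3) := by
      rintro a b (⟨ha, hb⟩ | ⟨ha, hb⟩)
      · interval_cases b
        · exact Or.inl ⟨rfl, by omega⟩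
        · exact Or.inr ⟨rfl, ha⟩
      · exact Or.inl ⟨hb, ha⟩
    rcases hcell i j hp with ⟨rfl, hi⟩ | ⟨rfl, hi⟩ <;>
      rcases hcell i' j' hq with ⟨rfl, hi'⟩ | ⟨rfl, hi'⟩
    · rw [Sof_col0 k x y z i hi, Sof_col0 k x y z i' hi'] at he
      rcases Nat.lt_trichotomy i i' with h | h | h
      · exact absurd he (Nat.ne_of_lt (fs_mono hxy hyz h))
      · rw [h]
      · exact absurd he.symm (Nat.ne_of_lt (fs_mono hxy hyz h))
    · exfalso
      rw [Sof_col0 k x y z i hi, Sof_col1 k x y z i' hi'] at he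
      have := fs_ne (x := x) (y := y) (z := z) hxy hyz i
      interval_cases i' <;> simp only [cmp3] at he <;> tauto
    · exfalso
      rw [Sof_col1 k x y z i hi, Sof_col0 k x y z i' hi'] at he
      have := fs_ne (x := x) (y := y) (z := z) hxy hyz i'
      interval_cases i <;> simp only [cmp3] at he <;> tauto
    · rw [Sof_col1 k x y z i hi, Sof_col1 k x y z i' hi'] at he
      have : i = i' := by
        interval_cases i <;> interval_cases i' <;> simp only [cmp3] at he <;> omega
      rw [this]
  · -- SurjOn
    intro v hv
    simp only [Set.mem_Icc] at hv
    by_cases h1 : v = x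
    · exact ⟨(0,1), Or.inl ⟨by omega, by omega⟩, by rw [Sof_col1 k x y z 0 (by omega)]; simp [cmp3, h1]⟩
    by_cases h2 : v = y
    · exact ⟨(1,1), Or.inl ⟨by omega, by omega⟩, by rw [Sof_col1 k x y z 1 (by omega)]; simp [cmp3, h2]⟩
    by_cases h3 : v = z
    · exact ⟨(2,1), Or.inl ⟨by omega, by omega⟩, by rw [Sof_col1 k x y z 2 (by omega)]; simp [cmp3, h3]⟩
    · obtain ⟨i, hik, hie⟩ := fs_surj hxy hyz hx hzk v hv.1 hv.2 h1 h2 h3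
      exact ⟨(i,0), Or.inr ⟨hik, rfl⟩, by rw [Sof_col0 k x y z i hik]; exact hie⟩
  · -- rows
    intro i j j' hjj hc1 hc2
    have hj' : j' = 1 ∧ i < 3 := by
      rcases hc2 with ⟨h1, h2⟩ | ⟨h1, h2⟩ <;> omega
    obtain ⟨rfl, hi3⟩ := hj'
    have hj0 : j = 0 := by omega
    subst hj0
    rw [Sof_col0 k x y z i (by omega), Sof_col1 k x y z i hi3]
    interval_cases i <;> simp only [cmp3] <;> unfold fskip <;> split_ifs <;> omega
  · -- cols
    intro i i' j hii hc1 hc2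
    have hj : j = 0 ∨ j = 1 := by
      rcases hc1 with ⟨h1, h2⟩ | ⟨h1, h2⟩ <;> omega
    rcases hj with rfl | rfl
    · have hi' : i' < k+1 := by rcases hc2 with ⟨h1, h2⟩ | ⟨h1, h2⟩ <;> omega
      rw [Sof_col0 k x y z i (by omega), Sof_col0 k x y z i' hi']
      exact fs_mono hxy hyz hii
    · have hi3 : i' < 3 := by rcases hc2 with ⟨h1, h2⟩ | ⟨h1, h2⟩ <;> omega
      rw [Sof_col1 k x y z i (by omega), Sof_col1 k x y z i' hi3]
      interval_cases i' <;> interval_cases i <;> simp only [cmp3] <;> omega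
  · -- zero outside
    rintro ⟨i, j⟩ hp
    have h1 : ¬(i < 3 ∧ j = 1) := fun ⟨a, b⟩ => hp (Or.inl ⟨a, by omega⟩)
    have h2 : ¬(i < k+1 ∧ j = 0) := fun hh => hp (Or.inr hh)
    unfold Sof
    rw [if_neg h1, if_neg h2]

lemma tooth_struct (k : ℕ) (hk : 2 ≤ k) (T : ℕ×ℕ → ℕ) (hT : IsToothSYT k T) :
    (T (0,1), T (1,1), T (2,1)) ∈ RfinF k ∧ T = Sof k (T (0,1), T (1,1), T (2,1)) := by
  obtain ⟨⟨hmap, hinj, hsurj⟩, hrow, hcol, hzero⟩ := hT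
  set x := T (0,1) with hxd
  set y := T (1,1) with hyd
  set z := T (2,1) with hzd
  have cell1 : ∀ i, i < 3 → TCell k (i, 1) := fun i hi => Or.inl ⟨hi, by omega⟩
  have cell0 : ∀ i, i < k+1 → TCell k (i, 0) := fun i hi => Or.inr ⟨hi, rfl⟩
  have hmem : ∀ p, TCell k p → 1 ≤ T p ∧ T p ≤ k+4 := by
    intro p hp; have := hmap hp; simp only [Set.mem_Icc] at this; exact this
  have hxy : x < y := hcol 0 1 1 (by omega) (cell1 0 (by omega)) (cell1 1 (by omega))
  have hyz : y < z := hcol 1 2 1 (by omega) (cell1 1 (by omega)) (cell1 2 (by omega))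
  have hab : T (0,0) < T (1,0) := hcol 0 1 0 (by omega) (cell0 0 (by omega)) (cell0 1 (by omega))
  have hbc : T (1,0) < T (2,0) := hcol 1 2 0 (by omega) (cell0 1 (by omega)) (cell0 2 (by omega))
  have hax : T (0,0) < x := hrow 0 0 1 (by omega) (cell0 0 (by omega)) (cell1 0 (by omega))
  have hby : T (1,0) < y := hrow 1 0 1 (by omega) (cell0 1 (by omega)) (cell1 1 (by omega))
  have hcz : T (2,0) < z := hrow 2 0 1 (by omega) (cell0 2 (by omega)) (cell1 2 (by omega))
  have hne : ∀ p q, TCell k p → TCell k q → p ≠ q → T p ≠ T q := by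
    intro p q hp hq hpq he
    exact hpq (hinj hp hq he)
  have hbx : T (1,0) ≠ x := hne (1,0) (0,1) (cell0 1 (by omega)) (cell1 0 (by omega)) (by simp)
  have hcx : T (2,0) ≠ x := hne (2,0) (0,1) (cell0 2 (by omega)) (cell1 0 (by omega)) (by simp)
  have hcy : T (2,0) ≠ y := hne (2,0) (1,1) (cell0 2 (by omega)) (cell1 1 (by omega)) (by simp)
  have ha1 := hmem (0,0) (cell0 0 (by omega))
  have hzmem := hmem (2,1) (cell1 2 (by omega))
  have hmemR : (x,y,z) ∈ RfinF k := by
    rw [mem_RfinF]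
    refine ⟨by omega, hxy, hyz, by omega, by omega, by omega⟩
  refine ⟨hmemR, ?_⟩
  have hx2 : 2 ≤ x := by omega
  have hzk4 : z ≤ k+4 := by omega
  -- column 0 values
  have col0_val : ∀ i, i < k+1 → T (i, 0) = fskip x y z i := by
    intro i
    induction i with
    | zero =>
      intro _
      have h1 : T (0,0) = 1 := by
        obtain ⟨p, hp, hpe⟩ := hsurj (by simp only [Set.mem_Icc]; omega : (1:ℕ) ∈ Set.Icc 1 (k+4))
        obtain ⟨pi, pj⟩ := p
        simp only [Set.mem_setOf_eq] at hp
        have hple : T (0,0) ≤ T (pi, pj) := by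
          rcases hp with ⟨h1, h2⟩ | ⟨h1, h2⟩
          · interval_cases pj
            · rcases Nat.eq_zero_or_pos pi with rfl | hpos
              · exact le_refl _
              · exact le_of_lt (hcol 0 pi 0 hpos (cell0 0 (by omega)) (cell0 pi (by omega)))
            · have hp0 : T (pi, 0) < T (pi, 1) :=
                hrow pi 0 1 (by omega) (cell0 pi (by omega)) (cell1 pi h1)
              rcases Nat.eq_zero_or_pos pi with rfl | hpos
              · omega
              · have := hcol 0 pi 0 hpos (cell0 0 (by omega)) (cell0 pi (by omega))
                omega
          · subst h2
            rcases Nat.eq_zero_or_pos pi with rfl | hpos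
            · exact le_refl _
            · exact le_of_lt (hcol 0 pi 0 hpos (cell0 0 (by omega)) (cell0 pi h1))
        rw [hpe] at hple
        omega
      rw [h1]
      unfold fskip
      split_ifs <;> omega
    | succ i ih =>
      intro hik
      have ihv : T (i, 0) = fskip x y z i := ih (by omega)
      set w := fskip x y z (i+1) with hwd
      have hwb := fs_bounds (x := x) (y := y) hzk4 (i+1) hik
      have hwne := fs_ne (x := x) (y := y) (z := z) hxy hyz (i+1)
      -- (a) w is attained in column 0 at some row > i, so T(i+1,0) ≤ w
      have hle : T (i+1, 0) ≤ w := by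
        obtain ⟨p, hp, hpe⟩ := hsurj (by simp only [Set.mem_Icc]; omega : w ∈ Set.Icc 1 (k+4))
        obtain ⟨pi, pj⟩ := p
        simp only [Set.mem_setOf_eq] at hp
        have hpj0 : pj = 0 ∧ pi < k+1 := by
          rcases hp with ⟨h1, h2⟩ | ⟨h1, h2⟩
          · interval_cases pj
            · exact ⟨rfl, by omega⟩
            · exfalso
              interval_cases pi <;> simp only [← hxd, ← hyd, ← hzd] at hpe <;> omega
          · exact ⟨h2, h1⟩
        obtain ⟨rfl, hpik⟩ := hpj0
        have hpi : i < pi := by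
          by_contra hc
          push_neg at hc
          have : T (pi, 0) ≤ T (i, 0) := by
            rcases Nat.eq_or_lt_of_le hc with rfl | hlt
            · exact le_refl _
            · exact le_of_lt (hcol pi i 0 hlt (cell0 pi (by omega)) (cell0 i (by omega)))
          have hmono := fs_mono (x := x) (y := y) (z := z) hxy hyz (show i < i+1 by omega)
          omega
        rcases Nat.eq_or_lt_of_le (show i+1 ≤ pi by omega) with rfl | hlt
        · omega
        · have := hcol (i+1) pi 0 hlt (cell0 (i+1) hik) (cell0 pi hpik)
          omega
      -- (b) T(i+1,0) ≥ w via gap lemma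
      have hu := hmem (i+1, 0) (cell0 (i+1) hik)
      have hux : T (i+1, 0) ≠ x := hne (i+1,0) (0,1) (cell0 (i+1) hik) (cell1 0 (by omega)) (by simp)
      have huy : T (i+1, 0) ≠ y := hne (i+1,0) (1,1) (cell0 (i+1) hik) (cell1 1 (by omega)) (by simp)
      have huz : T (i+1, 0) ≠ z := hne (i+1,0) (2,1) (cell0 (i+1) hik) (cell1 2 (by omega)) (by simp)
      have hgt : T (i, 0) < T (i+1, 0) :=
        hcol i (i+1) 0 (by omega) (cell0 i (by omega)) (cell0 (i+1) hik)
      have hge : w ≤ T (i+1, 0) := by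
        by_contra hc
        push_neg at hc
        have := fs_gap (x := x) (y := y) (z := z) hxy hyz i (T (i+1,0)) (by omega) hc
        tauto
      omega
  funext p
  obtain ⟨i, j⟩ := p
  by_cases h1 : i < 3 ∧ j = 1
  · obtain ⟨hi3, rfl⟩ := h1
    rw [Sof_col1 k x y z i hi3]
    interval_cases i <;> simp only [cmp3, hxd, hyd, hzd]
  · by_cases h2 : i < k+1 ∧ j = 0
    · obtain ⟨hik, rfl⟩ := h2
      rw [Sof_col0 k x y z i hik]
      exact col0_val i hik
    · have hnc : ¬ TCell k (i, j) := by
        rintro (⟨ha, hb⟩ | ⟨ha, hb⟩)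
        · interval_cases j
          · exact h2 ⟨by omega, rfl⟩
          · exact h1 ⟨ha, rfl⟩
        · exact h2 ⟨ha, hb⟩
      rw [hzero (i,j) hnc]
      unfold Sof
      rw [if_neg (by tauto), if_neg (by tauto)]

lemma Sof_injOn (k : ℕ) : Set.InjOn (Sof k) ↑(RfinF k) := by
  intro c _ c' _ h
  obtain ⟨x, y, z⟩ := c
  obtain ⟨x', y', z'⟩ := c'
  have h0 := congrFun h (0,1)
  have h1 := congrFun h (1,1)
  have h2 := congrFun h (2,1)
  rw [Sof_col1 k x y z 0 (by omega), Sof_col1 k x' y' z' 0 (by omega)] at h0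
  rw [Sof_col1 k x y z 1 (by omega), Sof_col1 k x' y' z' 1 (by omega)] at h1
  rw [Sof_col1 k x y z 2 (by omega), Sof_col1 k x' y' z' 2 (by omega)] at h2
  simp only [cmp3] at h0 h1 h2
  simp only [Prod.mk.injEq]
  exact ⟨h0, h1, h2⟩

lemma setR_eq (k : ℕ) (hk : 2 ≤ k) :
    {T : ℕ × ℕ → ℕ | IsToothSYT k T} = Sof k '' ↑(RfinF k) := by
  ext T
  simp only [Set.mem_setOf_eq, Set.mem_image, mem_coe]
  constructor
  · intro hT
    obtain ⟨hm, he⟩ := tooth_struct k hk T hT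
    exact ⟨_, hm, he.symm⟩
  · rintro ⟨⟨x, y, z⟩, hc, rfl⟩
    exact Sof_isTooth k hk x y z hc

lemma ncard_setR (k : ℕ) (hk : 2 ≤ k) :
    {T : ℕ × ℕ → ℕ | IsToothSYT k T}.ncard = (RfinF k).card := by
  rw [setR_eq k hk, Set.ncard_image_of_injOn (Sof_injOn k), Set.ncard_coe_finset]


theorem stmt0 (k : ℕ) (hk : 2 ≤ k) :
    {T : ℕ → ℕ → ℕ | IsInc 3 k (3 + k) T ∧ IsPacked 3 k (3 + k) T}.ncard
      = {T : ℕ × ℕ → ℕ | IsToothSYT k T}.ncard := by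
  rw [ncard_setL k, ncard_setR k hk, card_LfinF k hk]
end

section
/- Let a, b ≥ 1. The map sending an increasing tableau T of shape a×b with entries at most a+b to the set {(i,j) : T(i,j) = i+j} is a bijection from Inc^{a+b}(a×b) onto the set of upper sets of the poset [a]×[b]. Consequently, the number of increasing tableaux of shape a×b with entries at most a+b equals the binomial coefficient C(a+b, a). -/
open Polynomial

section Stmt5Aux

open scoped Classical

private lemma chainRow {a b m : ℕ} {T : ℕ → ℕ → ℕ} (h : IsInc a b m T)
    {i : ℕ} (hi : i < a) :
    ∀ j', j' < b → ∀ j, j ≤ j' → T i j + (j' - j) ≤ T i j' := by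
  intro j'
  induction j' with
  | zero =>
    intro _ j hj
    have : j = 0 := Nat.le_zero.mp hj
    subst this; simp
  | succ n ih =>
    intro hb' j hj
    rcases Nat.eq_or_lt_of_le hj with rfl | hlt
    · simp
    · have h1 := ih (by omega) j (by omega)
      have h2 := h.2.1 i n (n + 1) hi (by omega) hb'
      omega

private lemma chainCol {a b m : ℕ} {T : ℕ → ℕ → ℕ} (h : IsInc a b m T)
    {j : ℕ} (hj : j < b) :
    ∀ i', i' < a → ∀ i, i ≤ i' → T i j + (i' - i) ≤ T i' j := by
  intro i'
  induction i' with
  | zero =>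
    intro _ i hi
    have : i = 0 := Nat.le_zero.mp hi
    subst this; simp
  | succ n ih =>
    intro ha' i hi
    rcases Nat.eq_or_lt_of_le hi with rfl | hlt
    · simp
    · have h1 := ih (by omega) i (by omega)
      have h2 := h.2.2.1 n (n + 1) j (by omega) ha' hj
      omega

private lemma inc_bounds {a b : ℕ} {T : ℕ → ℕ → ℕ} (h : IsInc a b (a + b) T)
    {i j : ℕ} (hi : i < a) (hj : j < b) :
    i + j + 1 ≤ T i j ∧ T i j ≤ i + j + 2 := by
  have low1 := chainRow h (show 0 < a by omega) j hj 0 (by omega)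
  have low2 := chainCol h hj i hi 0 (by omega)
  have l0 := (h.1 0 0 (by omega) (by omega)).1
  have up1 := chainRow h hi (b - 1) (by omega) j (by omega)
  have up2 := chainCol h (show b - 1 < b by omega) (a - 1) (by omega) i (by omega)
  have u0 := (h.1 (a - 1) (b - 1) (by omega) (by omega)).2
  omega

private lemma upset_eq_Ico {b : ℕ} {t : Finset ℕ} (hsub : t ⊆ Finset.range b)
    (hup : ∀ j ∈ t, ∀ j', j ≤ j' → j' < b → j' ∈ t) :
    t = Finset.Ico (b - t.card) b := by
  refine Finset.eq_of_subset_of_card_le ?_ ?_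
  · intro j hj
    have hjb : j < b := Finset.mem_range.mp (hsub hj)
    have h1 : Finset.Ico j b ⊆ t := by
      intro j' hj'
      rw [Finset.mem_Ico] at hj'
      exact hup j hj j' hj'.1 hj'.2
    have h2 : b - j ≤ t.card := by
      have := Finset.card_le_card h1
      simpa using this
    rw [Finset.mem_Ico]
    omega
  · rw [Nat.card_Ico]
    omega

/-- Number of elements of row `i` belonging to `S`. -/
noncomputable def rowCount (b : ℕ) (S : Set (ℕ × ℕ)) (i : ℕ) : ℕ :=
  ((Finset.range b).filter fun j => (i, j) ∈ S).card

private lemma rowCount_le {b : ℕ} {S : Set (ℕ × ℕ)} {i : ℕ} : rowCount b S i ≤ b := by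
  have := Finset.card_le_card
    (Finset.filter_subset (fun j => (i, j) ∈ S) (Finset.range b))
  simpa [rowCount] using this

private lemma rowchar {a b : ℕ} {S : Set (ℕ × ℕ)} (hS : IsUpper a b S)
    {i : ℕ} (hi : i < a) (j : ℕ) :
    (i, j) ∈ S ↔ j < b ∧ b ≤ j + rowCount b S i := by
  set t := (Finset.range b).filter fun j => (i, j) ∈ S with ht
  have hrc : rowCount b S i = t.card := rfl
  have hmem : ∀ j', j' ∈ t ↔ j' < b ∧ (i, j') ∈ S := by
    intro j'; simp [ht]
  have heq : t = Finset.Ico (b - t.card) b := by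
    apply upset_eq_Ico (Finset.filter_subset _ _)
    intro j1 h1 j2 h12 h2b
    rw [hmem] at h1 ⊢
    exact ⟨h2b, hS.2 (i, j1) (i, j2) h1.2 ⟨hi, h2b⟩ (Prod.mk_le_mk.mpr ⟨le_rfl, h12⟩)⟩
  constructor
  · intro hjS
    have hjb : j < b := (hS.1 _ hjS).2
    have hmt : j ∈ t := (hmem j).mpr ⟨hjb, hjS⟩
    rw [heq, Finset.mem_Ico] at hmt
    exact ⟨hjb, by omega⟩
  · rintro ⟨hjb, hc⟩
    have hmt : j ∈ t := by
      rw [heq, Finset.mem_Ico]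
      omega
    exact ((hmem j).mp hmt).2

private lemma rowCount_mono {a b : ℕ} {S : Set (ℕ × ℕ)} (hS : IsUpper a b S)
    {i i' : ℕ} (hii : i ≤ i') (hi' : i' < a) : rowCount b S i ≤ rowCount b S i' := by
  unfold rowCount
  apply Finset.card_le_card
  intro j hj
  simp only [Finset.mem_filter, Finset.mem_range] at hj ⊢
  exact ⟨hj.1, hS.2 _ _ hj.2 ⟨hi', hj.1⟩ (Prod.mk_le_mk.mpr ⟨hii, le_rfl⟩)⟩

/-- The lattice-path finset attached to an upper set. -/
noncomputable def phiU (a b : ℕ) (S : Set (ℕ × ℕ)) : Finset ℕ :=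
  (Finset.range a).image fun i => rowCount b S i + i

private lemma phiU_strict {a b : ℕ} {S : Set (ℕ × ℕ)} (hS : IsUpper a b S)
    {i i' : ℕ} (h : i < i') (hi' : i' < a) :
    rowCount b S i + i < rowCount b S i' + i' := by
  have := rowCount_mono (b := b) hS (le_of_lt h) hi'
  omega

private lemma phiU_card {a b : ℕ} {S : Set (ℕ × ℕ)} (hS : IsUpper a b S) :
    (phiU a b S).card = a := by
  unfold phiU
  rw [Finset.card_image_of_injOn, Finset.card_range]
  intro i hi j hj hij
  simp only [Finset.coe_range, Set.mem_Iio] at hi hj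
  have hij2 : rowCount b S i + i = rowCount b S j + j := hij
  rcases lt_trichotomy i j with h | h | h
  · have := phiU_strict hS h hj; omega
  · exact h
  · have := phiU_strict hS h hi; omega

private lemma count_bij (a b : ℕ) (ha : 1 ≤ a) (hb : 1 ≤ b) :
    Set.BijOn (phiU a b) {S : Set (ℕ × ℕ) | IsUpper a b S}
      ↑((Finset.range (a + b)).powersetCard a) := by
  refine ⟨?_, ?_, ?_⟩
  · -- MapsTo
    intro S hS
    simp only [Set.mem_setOf_eq] at hS
    simp only [Finset.mem_coe, Finset.mem_powersetCard]
    refine ⟨?_, phiU_card hS⟩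
    intro x hx
    simp only [phiU, Finset.mem_image, Finset.mem_range] at hx
    obtain ⟨i, hi, rfl⟩ := hx
    have := rowCount_le (b := b) (S := S) (i := i)
    simp only [Finset.mem_range]
    omega
  · -- InjOn
    intro S hS S' hS' heq
    simp only [Set.mem_setOf_eq] at hS hS'
    have h1 : (phiU a b S).card = a := phiU_card hS
    have hc : ∀ i, i < a → rowCount b S i = rowCount b S' i := by
      have hfm : StrictMono (fun i : Fin a => rowCount b S i.val + i.val) := by
        intro i i' hii
        exact phiU_strict hS (Fin.lt_def.mp hii) i'.isLt
      have hgm : StrictMono (fun i : Fin a => rowCount b S' i.val + i.val) := by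
        intro i i' hii
        exact phiU_strict hS' (Fin.lt_def.mp hii) i'.isLt
      have hfs : ∀ x : Fin a, rowCount b S x.val + x.val ∈ phiU a b S := fun x =>
        Finset.mem_image_of_mem _ (Finset.mem_range.mpr x.isLt)
      have hgs : ∀ x : Fin a, rowCount b S' x.val + x.val ∈ phiU a b S := by
        intro x
        rw [heq]
        exact Finset.mem_image_of_mem _ (Finset.mem_range.mpr x.isLt)
      have e1 := Finset.orderEmbOfFin_unique h1 hfs hfm
      have e2 := Finset.orderEmbOfFin_unique h1 hgs hgm
      intro i hi
      have := congrFun (e1.trans e2.symm) ⟨i, hi⟩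
      simp only at this
      omega
    ext p
    obtain ⟨i, j⟩ := p
    by_cases hi : i < a
    · rw [rowchar hS hi j, rowchar hS' hi j, hc i hi]
    · exact iff_of_false (fun h => hi (hS.1 _ h).1) (fun h => hi (hS'.1 _ h).1)
  · -- SurjOn
    intro s hs
    simp only [Finset.mem_coe, Finset.mem_powersetCard] at hs
    obtain ⟨hsub, hcard⟩ := hs
    set F : ℕ → ℕ := fun i => if hi : i < a then s.orderEmbOfFin hcard ⟨i, hi⟩ else 0 with hF
    have hFmem : ∀ i, i < a → F i ∈ s := by
      intro i hi
      simp only [hF, dif_pos hi]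
      exact Finset.orderEmbOfFin_mem s hcard _
    have hFgap : ∀ i i', i ≤ i' → i' < a → F i + (i' - i) ≤ F i' := by
      intro i i'
      induction i' with
      | zero =>
        intro h0 _
        have : i = 0 := by omega
        subst this; simp
      | succ n ih =>
        intro hii hna
        rcases Nat.eq_or_lt_of_le hii with rfl | hlt
        · simp
        · have h1 := ih (by omega) (by omega)
          have h2 : F n < F (n + 1) := by
            simp only [hF, dif_pos (show n < a by omega), dif_pos hna]
            exact (s.orderEmbOfFin hcard).strictMono (Fin.mk_lt_mk.mpr (by omega))
          omega
    have hFlb : ∀ i, i < a → i ≤ F i := by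
      intro i hi
      have := hFgap 0 i (by omega) hi
      omega
    have hFub : ∀ i, i < a → F i ≤ b + i := by
      intro i hi
      have h1 := hFgap i (a - 1) (by omega) (by omega)
      have h2 := Finset.mem_range.mp (hsub (hFmem (a - 1) (by omega)))
      omega
    set S : Set (ℕ × ℕ) := {p | p.1 < a ∧ p.2 < b ∧ b + p.1 ≤ p.2 + F p.1} with hSdef
    have hSU : IsUpper a b S := by
      constructor
      · intro p hp
        exact ⟨hp.1, hp.2.1⟩
      · intro p q hp hq hpq
        rw [Prod.le_def] at hpq
        have hgap := hFgap p.1 q.1 hpq.1 hq.1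
        have hp3 := hp.2.2
        exact ⟨hq.1, hq.2, by omega⟩
    refine ⟨S, hSU, ?_⟩
    have hrc : ∀ i, i < a → rowCount b S i = F i - i := by
      intro i hi
      have hcc : rowCount b S i = (Finset.Ico (b + i - F i) b).card := by
        rw [rowCount]
        congr 1
        ext j
        simp only [Finset.mem_filter, Finset.mem_range, Finset.mem_Ico, hSdef,
          Set.mem_setOf_eq]
        constructor
        · rintro ⟨hjb, _, _, h3⟩
          omega
        · intro h
          exact ⟨h.2, hi, h.2, by omega⟩
      rw [hcc, Nat.card_Ico]
      have h1 := hFlb i hi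
      have h2 := hFub i hi
      omega
    have himg : phiU a b S = (Finset.range a).image F := by
      unfold phiU
      apply Finset.image_congr
      intro i hi
      rw [Finset.mem_coe, Finset.mem_range] at hi
      show rowCount b S i + i = F i
      rw [hrc i hi]
      have := hFlb i hi
      omega
    rw [himg]
    apply Finset.eq_of_subset_of_card_le
    · intro x hx
      simp only [Finset.mem_image, Finset.mem_range] at hx
      obtain ⟨i, hi, rfl⟩ := hx
      exact hFmem i hi
    · rw [Finset.card_image_of_injOn, Finset.card_range, hcard]
      intro i hi j hj hij
      simp only [Finset.coe_range, Set.mem_Iio] at hi hj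
      have hij2 : F i = F j := hij
      rcases lt_trichotomy i j with h | h | h
      · have := hFgap i j (le_of_lt h) hj; omega
      · exact h
      · have := hFgap j i (le_of_lt h) hi; omega

end Stmt5Aux

theorem stmt5 (a b : ℕ) (ha : 1 ≤ a) (hb : 1 ≤ b) :
    Set.BijOn (fun T : ℕ → ℕ → ℕ => {p : ℕ × ℕ | T p.1 p.2 = p.1 + p.2 + 2})
      {T : ℕ → ℕ → ℕ | IsInc a b (a + b) T} {S : Set (ℕ × ℕ) | IsUpper a b S} ∧
    {T : ℕ → ℕ → ℕ | IsInc a b (a + b) T}.ncard = Nat.choose (a + b) a := by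
  classical
  have hbij1 : Set.BijOn (fun T : ℕ → ℕ → ℕ => {p : ℕ × ℕ | T p.1 p.2 = p.1 + p.2 + 2})
      {T : ℕ → ℕ → ℕ | IsInc a b (a + b) T} {S : Set (ℕ × ℕ) | IsUpper a b S} := by
    refine ⟨?_, ?_, ?_⟩
    · intro T hT
      simp only [Set.mem_setOf_eq] at hT ⊢
      constructor
      · intro p hp
        rw [Set.mem_setOf_eq] at hp
        by_contra hc
        have := hT.2.2.2 p.1 p.2 hc
        omega
      · intro p q hp hq hpq
        rw [Set.mem_setOf_eq] at hp ⊢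
        rw [Prod.le_def] at hpq
        have hpc : p.1 < a ∧ p.2 < b := by
          by_contra hc
          have := hT.2.2.2 p.1 p.2 hc
          omega
        have h1 := chainRow hT hpc.1 q.2 hq.2 p.2 hpq.2
        have h2 := chainCol hT hq.2 q.1 hq.1 p.1 hpq.1
        have h3 := (inc_bounds hT hq.1 hq.2).2
        omega
    · intro T hT T' hT' heq
      simp only [Set.mem_setOf_eq] at hT hT'
      funext i j
      by_cases hc : i < a ∧ j < b
      · have b1 := inc_bounds hT hc.1 hc.2
        have b2 := inc_bounds hT' hc.1 hc.2
        have hiff := Set.ext_iff.mp heq (i, j)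
        simp only [Set.mem_setOf_eq] at hiff
        omega
      · rw [hT.2.2.2 i j hc, hT'.2.2.2 i j hc]
    · intro S hS
      simp only [Set.mem_setOf_eq] at hS
      refine ⟨fun i j => if i < a ∧ j < b then
        (if (i, j) ∈ S then i + j + 2 else i + j + 1) else 0, ?_, ?_⟩
      · simp only [Set.mem_setOf_eq]
        refine ⟨?_, ?_, ?_, ?_⟩
        · intro i j hi hj
          beta_reduce
          rw [if_pos ⟨hi, hj⟩]
          split_ifs <;> omega
        · intro i j j' hi hjj hj'
          beta_reduce
          rw [if_pos (show i < a ∧ j < b from ⟨hi, by omega⟩),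
            if_pos (show i < a ∧ j' < b from ⟨hi, hj'⟩)]
          by_cases h1 : (i, j) ∈ S
          · rw [if_pos h1, if_pos (hS.2 (i, j) (i, j') h1 ⟨hi, hj'⟩
              (Prod.mk_le_mk.mpr ⟨le_rfl, le_of_lt hjj⟩))]
            omega
          · rw [if_neg h1]; split_ifs <;> omega
        · intro i i' j hii hi' hj
          beta_reduce
          rw [if_pos (show i < a ∧ j < b from ⟨by omega, hj⟩),
            if_pos (show i' < a ∧ j < b from ⟨hi', hj⟩)]
          by_cases h1 : (i, j) ∈ S
          · rw [if_pos h1, if_pos (hS.2 (i, j) (i', j) h1 ⟨hi', hj⟩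
              (Prod.mk_le_mk.mpr ⟨le_of_lt hii, le_rfl⟩))]
            omega
          · rw [if_neg h1]; split_ifs <;> omega
        · intro i j h
          beta_reduce
          rw [if_neg h]
      · ext p
        obtain ⟨i, j⟩ := p
        simp only [Set.mem_setOf_eq]
        constructor
        · intro h
          by_cases hc : i < a ∧ j < b
          · rw [if_pos hc] at h
            by_cases h1 : (i, j) ∈ S
            · exact h1
            · rw [if_neg h1] at h; omega
          · rw [if_neg hc] at h; omega
        · intro hmem
          have hc := hS.1 _ hmem
          rw [if_pos (show i < a ∧ j < b from ⟨hc.1, hc.2⟩), if_pos hmem]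
  refine ⟨hbij1, ?_⟩
  have hbij2 := count_bij a b ha hb
  calc {T : ℕ → ℕ → ℕ | IsInc a b (a + b) T}.ncard
      = ((fun T : ℕ → ℕ → ℕ => {p : ℕ × ℕ | T p.1 p.2 = p.1 + p.2 + 2}) ''
          {T : ℕ → ℕ → ℕ | IsInc a b (a + b) T}).ncard :=
        (Set.ncard_image_of_injOn hbij1.injOn).symm
    _ = {S : Set (ℕ × ℕ) | IsUpper a b S}.ncard := by rw [hbij1.image_eq]
    _ = ((phiU a b) '' {S : Set (ℕ × ℕ) | IsUpper a b S}).ncard :=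
        (Set.ncard_image_of_injOn hbij2.injOn).symm
    _ = (↑((Finset.range (a + b)).powersetCard a) : Set (Finset ℕ)).ncard := by
        rw [hbij2.image_eq]
    _ = ((Finset.range (a + b)).powersetCard a).card := Set.ncard_coe_finset _
    _ = Nat.choose (a + b) a := by rw [Finset.card_powersetCard, Finset.card_range]
end

section
/- Let a, b ≥ 1 and define Θ : Inc^{a+b}(a×b) → J([a]×[b]) by Θ(T) = {(a−i+1, b−j+1) : T(i,j) = i+j}. Then Θ is a bijection onto the set of order ideals of [a]×[b], and Θ intertwines K-promotion with rowmotion: Θ(KPro(T)) = Row(Θ(T)) for every T ∈ Inc^{a+b}(a×b). -/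
open Polynomial

section KProofAux

attribute [local instance] Classical.propDecidable

/-- `T i j = i+j+1`, i.e. the cell carries the minimal possible entry. -/
def DD (T : ℕ → ℕ → ℕ) (i j : ℕ) : Prop := T i j = i + j + 1

/-- `(i,j)` is a maximal cell of the down-set `{DD}`. -/
def Mx (a b : ℕ) (T : ℕ → ℕ → ℕ) (i j : ℕ) : Prop :=
  i < a ∧ j < b ∧ DD T i j ∧ (i + 1 < a → ¬ DD T (i + 1) j) ∧ (j + 1 < b → ¬ DD T i (j + 1))

/-- `(i,j)` lies (weakly) above some maximal cell of the down-set. -/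
def UU (a b : ℕ) (T : ℕ → ℕ → ℕ) (i j : ℕ) : Prop :=
  ∃ p q, p ≤ i ∧ q ≤ j ∧ Mx a b T p q

/-- Closed form for the `t`-th iterate of `kStep` on the initial filling. -/
noncomputable def cf (a b : ℕ) (T : ℕ → ℕ → ℕ) (t : ℕ) : ℕ → ℕ → ℕ := fun i j =>
  if i < a ∧ j < b then
    if DD T i j ∨ UU a b T i j then
      if i + j = min t (a + b - 2) then 0
      else if i + j < t then (if UU a b T i j then i + j + 3 else i + j + 2)
      else (if DD T i j then i + j + 1 else i + j + 2)
    else i + j + 2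
  else 0

variable {a b : ℕ} {T : ℕ → ℕ → ℕ}

lemma add_le_row (hT : IsInc a b (a + b) T) :
    ∀ k i j, i < a → j + k < b → T i j + k ≤ T i (j + k) := by
  intro k
  induction k with
  | zero => simp
  | succ n ih =>
    intro i j hi hk
    have h1 := ih i j hi (by omega)
    have h2 := hT.2.1 i (j + n) (j + n + 1) hi (by omega) (by omega)
    rw [show j + (n + 1) = j + n + 1 by omega]
    omega

lemma add_le_col (hT : IsInc a b (a + b) T) :
    ∀ k i j, i + k < a → j < b → T i j + k ≤ T (i + k) j := by
  intro k
  induction k with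
  | zero => simp
  | succ n ih =>
    intro i j hi hj
    have h1 := ih i j (by omega) hj
    have h2 := hT.2.2.1 (i + n) (i + n + 1) j (by omega) (by omega) hj
    rw [show i + (n + 1) = i + n + 1 by omega]
    omega

lemma lbound (hT : IsInc a b (a + b) T) {i j : ℕ} (hi : i < a) (hj : j < b) :
    i + j + 1 ≤ T i j := by
  have h0 := (hT.1 0 0 (by omega) (by omega)).1
  have h1 := add_le_row hT j 0 0 (by omega) (by omega)
  have h2 := add_le_col hT i 0 j (by omega) hj
  simp at h1 h2
  omega

lemma ubound (hT : IsInc a b (a + b) T) {i j : ℕ} (hi : i < a) (hj : j < b) :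
    T i j ≤ i + j + 2 := by
  have h1 := add_le_col hT (a - 1 - i) i j (by omega) hj
  rw [show i + (a - 1 - i) = a - 1 by omega] at h1
  have h2 := add_le_row hT (b - 1 - j) (a - 1) j (by omega) (by omega)
  rw [show j + (b - 1 - j) = b - 1 by omega] at h2
  have h3 := (hT.1 (a - 1) (b - 1) (by omega) (by omega)).2
  omega

lemma nDD_iff (hT : IsInc a b (a + b) T) {i j : ℕ} (hi : i < a) (hj : j < b) :
    ¬ DD T i j ↔ T i j = i + j + 2 := by
  have := lbound hT hi hj; have := ubound hT hi hj
  unfold DD; omega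

lemma Ddc (hT : IsInc a b (a + b) T) {i j i' j' : ℕ} (hi : i < a) (hj : j < b)
    (hi' : i' ≤ i) (hj' : j' ≤ j) (hd : DD T i j) : DD T i' j' := by
  have h1 := add_le_row hT (j - j') i' j' (by omega) (by omega)
  rw [show j' + (j - j') = j by omega] at h1
  have h2 := add_le_col hT (i - i') i' j (by omega) hj
  rw [show i' + (i - i') = i by omega] at h2
  have h3 := lbound hT (show i' < a by omega) (show j' < b by omega)
  unfold DD at *; omega

lemma Mx_max (hT : IsInc a b (a + b) T) {p q x y : ℕ} (hm : Mx a b T p q)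
    (hx : x < a) (hy : y < b) (hd : DD T x y) (hpx : p ≤ x) (hqy : q ≤ y) :
    x = p ∧ y = q := by
  by_contra hc
  rcases (show p < x ∨ q < y by omega) with h | h
  · exact hm.2.2.2.1 (by omega) (Ddc hT hx hy (by omega) hqy hd)
  · exact hm.2.2.2.2 (by omega) (Ddc hT hx hy hpx (by omega) hd)

lemma U_noD (hT : IsInc a b (a + b) T) {i j x y : ℕ} (hu : UU a b T i j)
    (hx : x < a) (hy : y < b) (hix : i ≤ x) (hjy : j ≤ y) (hs : i + j < x + y) :
    ¬ DD T x y := by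
  intro hd
  obtain ⟨p, q, hp, hq, hm⟩ := hu
  have := Mx_max hT hm hx hy hd (by omega) (by omega)
  omega

lemma DU_max (hT : IsInc a b (a + b) T) {i j : ℕ} (hi : i < a) (hj : j < b)
    (hdu : DD T i j ∨ UU a b T i j)
    (h1 : i + 1 < a → ¬ DD T (i + 1) j) (h2 : j + 1 < b → ¬ DD T i (j + 1)) :
    UU a b T i j := by
  rcases hdu with hd | hu
  · exact ⟨i, j, le_refl _, le_refl _, hi, hj, hd, h1, h2⟩
  · exact hu

lemma UU_mono {i j i' j' : ℕ} (h : UU a b T i j) (hi : i ≤ i') (hj : j ≤ j') :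
    UU a b T i' j' := by
  obtain ⟨p, q, hp, hq, hm⟩ := h
  exact ⟨p, q, by omega, by omega, hm⟩

lemma cf_out {t i j : ℕ} (h : ¬ (i < a ∧ j < b)) : cf a b T t i j = 0 := by
  unfold cf; rw [if_neg h]

lemma cf_nDU {t i j : ℕ} (hi : i < a) (hj : j < b)
    (h : ¬ (DD T i j ∨ UU a b T i j)) : cf a b T t i j = i + j + 2 := by
  unfold cf; rw [if_pos ⟨hi, hj⟩, if_neg h]

lemma cf_front {t i j : ℕ} (hi : i < a) (hj : j < b)
    (hdu : DD T i j ∨ UU a b T i j) (hs : i + j = min t (a + b - 2)) :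
    cf a b T t i j = 0 := by
  unfold cf; rw [if_pos ⟨hi, hj⟩, if_pos hdu, if_pos hs]

lemma cf_ahead {t i j : ℕ} (hi : i < a) (hj : j < b) (ht : t < i + j) :
    cf a b T t i j = if DD T i j then i + j + 1 else i + j + 2 := by
  unfold cf; rw [if_pos ⟨hi, hj⟩]
  by_cases hdu : DD T i j ∨ UU a b T i j
  · rw [if_pos hdu, if_neg (by omega), if_neg (by omega)]
  · rw [if_neg hdu, if_neg (by tauto)]

lemma cf_behind {t i j : ℕ} (hi : i < a) (hj : j < b) (ht : i + j < t)
    (hc : i + j < a + b - 2) :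
    cf a b T t i j = if UU a b T i j then i + j + 3 else i + j + 2 := by
  unfold cf; rw [if_pos ⟨hi, hj⟩]
  by_cases hdu : DD T i j ∨ UU a b T i j
  · rw [if_pos hdu, if_neg (by omega), if_pos ht]
  · rw [if_neg hdu, if_neg (by tauto)]

lemma cf_eq_zero {t i j : ℕ} (hi : i < a) (hj : j < b) :
    cf a b T t i j = 0 ↔ ((DD T i j ∨ UU a b T i j) ∧ i + j = min t (a + b - 2)) := by
  unfold cf; rw [if_pos ⟨hi, hj⟩]
  by_cases hdu : DD T i j ∨ UU a b T i j
  · rw [if_pos hdu]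
    by_cases hs : i + j = min t (a + b - 2)
    · rw [if_pos hs]; simp [hdu, hs]
    · rw [if_neg hs]
      constructor
      · intro h; split_ifs at h <;> omega
      · rintro ⟨-, h⟩; exact absurd h hs
  · rw [if_neg hdu]; simp [hdu]

/-- value of `cf t` at a cell one diagonal ahead of the front. -/
lemma cf_next (hT : IsInc a b (a + b) T) {t i j : ℕ} (hi : i < a) (hj : j < b)
    (hc : i + j = t + 1) :
    cf a b T t i j = if DD T i j then t + 2 else t + 3 := by
  rw [cf_ahead hi hj (by omega)]
  split_ifs <;> omega

lemma seMin_eq (F : ℕ → ℕ → ℕ) (p q : ℕ) :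
    seMin a b F p q =
      (if (if p + 1 < a then F (p + 1) q else 0) = 0 then
        (if q + 1 < b then F p (q + 1) else 0)
      else if (if q + 1 < b then F p (q + 1) else 0) = 0 then
        (if p + 1 < a then F (p + 1) q else 0)
      else min (if p + 1 < a then F (p + 1) q else 0)
        (if q + 1 < b then F p (q + 1) else 0)) := rfl

lemma seMin_front (hT : IsInc a b (a + b) T) {t p q : ℕ} (hp : p < a) (hq : q < b)
    (hpq : p + q = t) (hlt : t < a + b - 2) (hdu : DD T p q ∨ UU a b T p q) :
    seMin a b (cf a b T t) p q = if UU a b T p q then t + 3 else t + 2 := by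
  have hnb : p + 1 < a ∨ q + 1 < b := by omega
  rw [seMin_eq]
  have hSv : p + 1 < a → cf a b T t (p + 1) q = if DD T (p + 1) q then t + 2 else t + 3 :=
    fun h => cf_next hT h hq (by omega)
  have hEv : q + 1 < b → cf a b T t p (q + 1) = if DD T p (q + 1) then t + 2 else t + 3 :=
    fun h => cf_next hT hp h (by omega)
  have hex : ¬ UU a b T p q →
      (p + 1 < a ∧ DD T (p + 1) q) ∨ (q + 1 < b ∧ DD T p (q + 1)) := by
    intro hu
    by_contra hcon
    push_neg at hcon
    exact hu (DU_max hT hp hq hdu (fun h => hcon.1 h) (fun h => hcon.2 h))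
  by_cases h1 : p + 1 < a <;> by_cases h2 : q + 1 < b
  · rw [if_pos h1, if_pos h2, hSv h1, hEv h2]
    by_cases hu : UU a b T p q
    · rw [if_neg (U_noD hT hu h1 hq (by omega) le_rfl (by omega)),
        if_neg (U_noD hT hu hp h2 le_rfl (by omega) (by omega)), if_pos hu]
      simp
    · rcases hex hu with ⟨-, hd⟩ | ⟨-, hd⟩ <;> rw [if_pos hd, if_neg hu]
      · rw [if_neg (show ¬ t + 2 = 0 by omega)]
        by_cases hd2 : DD T p (q + 1)
        · rw [if_pos hd2, if_neg (show ¬ t + 2 = 0 by omega), min_self]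
        · rw [if_neg hd2, if_neg (show ¬ t + 3 = 0 by omega), min_eq_left (by omega)]
      · by_cases hd2 : DD T (p + 1) q
        · rw [if_pos hd2, if_neg (show ¬ t + 2 = 0 by omega),
            if_neg (show ¬ t + 2 = 0 by omega), min_self]
        · rw [if_neg hd2, if_neg (show ¬ t + 3 = 0 by omega),
            if_neg (show ¬ t + 2 = 0 by omega), min_eq_right (by omega)]
  · rw [if_pos h1, if_neg h2, hSv h1]
    by_cases hu : UU a b T p q
    · rw [if_neg (U_noD hT hu h1 hq (by omega) le_rfl (by omega)), if_pos hu]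
      simp
    · rcases hex hu with ⟨-, hd⟩ | ⟨hq2, -⟩
      · rw [if_pos hd, if_neg hu]; simp
      · exact absurd hq2 h2
  · rw [if_neg h1, if_pos h2, hEv h2]
    by_cases hu : UU a b T p q
    · rw [if_neg (U_noD hT hu hp h2 le_rfl (by omega) (by omega)), if_pos hu]
      simp
    · rcases hex hu with ⟨hp2, -⟩ | ⟨-, hd⟩
      · exact absurd hp2 h1
      · rw [if_pos hd, if_neg hu]; simp
  · omega

lemma kStep_eq (F : ℕ → ℕ → ℕ) (i j : ℕ) :
    kStep a b F i j =
      if i < a ∧ j < b then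
        if F i j = 0 then seMin a b F i j
        else if (0 < i ∧ F (i - 1) j = 0 ∧ seMin a b F (i - 1) j = F i j) ∨
                (0 < j ∧ F i (j - 1) = 0 ∧ seMin a b F i (j - 1) = F i j) then 0
        else F i j
      else 0 := rfl

lemma kStep_cf (hT : IsInc a b (a + b) T) (t : ℕ) :
    kStep a b (cf a b T t) = cf a b T (t + 1) := by
  funext i j
  by_cases hcell : i < a ∧ j < b
  swap
  · rw [kStep_eq, if_neg hcell, cf_out hcell]
  obtain ⟨hi, hj⟩ := hcell
  rw [kStep_eq, if_pos ⟨hi, hj⟩]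
  by_cases hz : cf a b T t i j = 0
  · rw [if_pos hz]
    obtain ⟨hdu, hs⟩ := (cf_eq_zero hi hj).mp hz
    by_cases hts : t < a + b - 2
    · have hct : i + j = t := by omega
      rw [seMin_front hT hi hj hct hts hdu, cf_behind hi hj (by omega) (by omega), hct]
    · have h0 : cf a b T (t + 1) i j = 0 := cf_front hi hj hdu (by omega)
      rw [h0, seMin_eq, if_neg (show ¬ i + 1 < a by omega),
        if_neg (show ¬ j + 1 < b by omega)]
      simp
  · rw [if_neg hz]
    have hnz : ¬ ((DD T i j ∨ UU a b T i j) ∧ i + j = min t (a + b - 2)) :=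
      fun h => hz ((cf_eq_zero hi hj).mpr h)
    by_cases key : i + j = t + 1
    · have ht2 : t + 1 ≤ a + b - 2 := by omega
      have hv : cf a b T t i j = if DD T i j then t + 2 else t + 3 := cf_next hT hi hj key
      by_cases hdu : DD T i j ∨ UU a b T i j
      · have hzc : (0 < i ∧ cf a b T t (i - 1) j = 0 ∧
              seMin a b (cf a b T t) (i - 1) j = cf a b T t i j) ∨
            (0 < j ∧ cf a b T t i (j - 1) = 0 ∧
              seMin a b (cf a b T t) i (j - 1) = cf a b T t i j) := by
          by_cases hDD : DD T i j
          · rcases (show 0 < i ∨ 0 < j by omega) with h0 | h0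
            · left
              have hDn : DD T (i - 1) j := Ddc hT hi hj (by omega) le_rfl hDD
              have hnu : ¬ UU a b T (i - 1) j :=
                fun hu => U_noD hT hu hi hj (by omega) le_rfl (by omega) hDD
              refine ⟨h0, cf_front (by omega) hj (Or.inl hDn) (by omega), ?_⟩
              rw [seMin_front hT (by omega) hj (by omega) (by omega) (Or.inl hDn),
                if_neg hnu, hv, if_pos hDD]
            · right
              have hDn : DD T i (j - 1) := Ddc hT hi hj le_rfl (by omega) hDD
              have hnu : ¬ UU a b T i (j - 1) :=
                fun hu => U_noD hT hu hi hj le_rfl (by omega) (by omega) hDD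
              refine ⟨h0, cf_front hi (by omega) (Or.inl hDn) (by omega), ?_⟩
              rw [seMin_front hT hi (by omega) (by omega) (by omega) (Or.inl hDn),
                if_neg hnu, hv, if_pos hDD]
          · obtain ⟨p, q, hpi, hqj, hm⟩ := hdu.resolve_left hDD
            have hne : ¬ (p = i ∧ q = j) := by
              rintro ⟨rfl, rfl⟩; exact hDD hm.2.2.1
            rcases (show p < i ∨ q < j by omega) with h0 | h0
            · left
              have hun : UU a b T (i - 1) j := ⟨p, q, by omega, hqj, hm⟩
              refine ⟨by omega, cf_front (by omega) hj (Or.inr hun) (by omega), ?_⟩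
              rw [seMin_front hT (by omega) hj (by omega) (by omega) (Or.inr hun),
                if_pos hun, hv, if_neg hDD]
            · right
              have hun : UU a b T i (j - 1) := ⟨p, q, hpi, by omega, hm⟩
              refine ⟨by omega, cf_front hi (by omega) (Or.inr hun) (by omega), ?_⟩
              rw [seMin_front hT hi (by omega) (by omega) (by omega) (Or.inr hun),
                if_pos hun, hv, if_neg hDD]
        rw [if_pos hzc, cf_front hi hj hdu (by omega)]
      · have hcond : ¬ ((0 < i ∧ cf a b T t (i - 1) j = 0 ∧
              seMin a b (cf a b T t) (i - 1) j = cf a b T t i j) ∨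
            (0 < j ∧ cf a b T t i (j - 1) = 0 ∧
              seMin a b (cf a b T t) i (j - 1) = cf a b T t i j)) := by
          rintro (⟨h0, hzn, hsm⟩ | ⟨h0, hzn, hsm⟩)
          · obtain ⟨hdun, hsn⟩ := (cf_eq_zero (by omega) hj).mp hzn
            rw [seMin_front hT (by omega) hj (by omega) (by omega) hdun, hv,
              if_neg (fun hD => hdu (Or.inl hD))] at hsm
            have hun : UU a b T (i - 1) j := by
              by_contra hnu; rw [if_neg hnu] at hsm; omega
            exact hdu (Or.inr (UU_mono hun (by omega) le_rfl))
          · obtain ⟨hdun, hsn⟩ := (cf_eq_zero hi (by omega)).mp hzn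
            rw [seMin_front hT hi (by omega) (by omega) (by omega) hdun, hv,
              if_neg (fun hD => hdu (Or.inl hD))] at hsm
            have hun : UU a b T i (j - 1) := by
              by_contra hnu; rw [if_neg hnu] at hsm; omega
            exact hdu (Or.inr (UU_mono hun le_rfl (by omega)))
        rw [if_neg hcond, hv, if_neg (fun hD => hdu (Or.inl hD)), cf_nDU hi hj hdu]
        omega
    · have hcond : ¬ ((0 < i ∧ cf a b T t (i - 1) j = 0 ∧
            seMin a b (cf a b T t) (i - 1) j = cf a b T t i j) ∨
          (0 < j ∧ cf a b T t i (j - 1) = 0 ∧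
            seMin a b (cf a b T t) i (j - 1) = cf a b T t i j)) := by
        rintro (⟨h0, hzn, -⟩ | ⟨h0, hzn, -⟩)
        · obtain ⟨-, hsn⟩ := (cf_eq_zero (by omega) hj).mp hzn
          omega
        · obtain ⟨-, hsn⟩ := (cf_eq_zero hi (by omega)).mp hzn
          omega
      rw [if_neg hcond]
      by_cases hdu : DD T i j ∨ UU a b T i j
      · have hcs : i + j ≠ min t (a + b - 2) := fun h => hnz ⟨hdu, h⟩
        by_cases hlt : i + j < t
        · have hcb : i + j < a + b - 2 := by omega
          rw [cf_behind hi hj hlt hcb, cf_behind hi hj (by omega) hcb]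
        · have hgt : t + 1 < i + j := by omega
          rw [cf_ahead hi hj (by omega), cf_ahead hi hj hgt]
      · rw [cf_nDU hi hj hdu, cf_nDU hi hj hdu]

lemma cf_zero (hT : IsInc a b (a + b) T) :
    (fun i' j' => if i' < a ∧ j' < b then (if T i' j' = 1 then 0 else T i' j') else 0)
      = cf a b T 0 := by
  funext i j
  by_cases hcell : i < a ∧ j < b
  swap
  · rw [cf_out hcell, if_neg hcell]
  obtain ⟨hi, hj⟩ := hcell
  rw [if_pos ⟨hi, hj⟩]
  have hlb := lbound hT hi hj
  have hub := ubound hT hi hj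
  by_cases h1 : T i j = 1
  · have hc0 : i + j = 0 := by omega
    have hDD : DD T i j := by unfold DD; omega
    rw [if_pos h1, cf_front hi hj (Or.inl hDD) (by omega)]
  · rw [if_neg h1]
    unfold cf
    rw [if_pos ⟨hi, hj⟩]
    by_cases hDD : DD T i j
    · have hc : i + j ≠ 0 := by unfold DD at hDD; omega
      rw [if_pos (Or.inl hDD), if_neg (show ¬ i + j = min 0 (a + b - 2) by omega),
        if_neg (by omega), if_pos hDD]
      exact hDD
    · have hval : T i j = i + j + 2 := (nDD_iff hT hi hj).mp hDD
      by_cases hU : UU a b T i j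
      · have hc : i + j ≠ 0 := by
          intro hc0
          obtain ⟨p, q, hp, hq, hm⟩ := hU
          have : p = i ∧ q = j := by omega
          exact hDD (this.1 ▸ this.2 ▸ hm.2.2.1)
        rw [if_pos (Or.inr hU), if_neg (show ¬ i + j = min 0 (a + b - 2) by omega),
          if_neg (by omega), if_neg hDD]
        exact hval
      · rw [if_neg (by tauto)]
        exact hval

lemma iter_cf (hT : IsInc a b (a + b) T) (t : ℕ) :
    (kStep a b)^[t] (cf a b T 0) = cf a b T t := by
  induction t with
  | zero => simp
  | succ n ih => rw [Function.iterate_succ_apply', ih, kStep_cf hT n]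

lemma KPro_val (hT : IsInc a b (a + b) T) {i j : ℕ} (hi : i < a) (hj : j < b) :
    KPro a b (a + b) T i j = if UU a b T i j then i + j + 2 else i + j + 1 := by
  have hG : (kStep a b)^[a + b]
      (fun i' j' => if i' < a ∧ j' < b then (if T i' j' = 1 then 0 else T i' j') else 0)
      = cf a b T (a + b) := by
    rw [cf_zero hT, iter_cf hT]
  have hK : KPro a b (a + b) T i j =
      (if cf a b T (a + b) i j = 0 then a + b else cf a b T (a + b) i j - 1) := by
    unfold KPro
    rw [if_pos ⟨hi, hj⟩]
    show (if ((kStep a b)^[a + b]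
      (fun i' j' => if i' < a ∧ j' < b then (if T i' j' = 1 then 0 else T i' j') else 0)) i j = 0
      then a + b else _ - 1) = _
    rw [hG]
  rw [hK]
  by_cases hdu : DD T i j ∨ UU a b T i j
  · by_cases hcc : i + j = a + b - 2
    · have hU : UU a b T i j :=
        DU_max hT hi hj hdu (fun h => absurd h (by omega)) (fun h => absurd h (by omega))
      rw [cf_front hi hj hdu (by omega), if_pos rfl, if_pos hU]
      omega
    · have hv : cf a b T (a + b) i j = if UU a b T i j then i + j + 3 else i + j + 2 :=
        cf_behind hi hj (by omega) (by omega)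
      rw [hv]
      by_cases hU : UU a b T i j
      · rw [if_pos hU, if_pos hU, if_neg (by omega)]
        omega
      · rw [if_neg hU, if_neg hU, if_neg (by omega)]
        omega
  · have hU : ¬ UU a b T i j := fun h => hdu (Or.inr h)
    rw [cf_nDU hi hj hdu, if_neg (by omega), if_neg hU]
    omega

lemma mem_theta (hT : IsInc a b (a + b) T) {p : ℕ × ℕ} :
    p ∈ theta a b T ↔ p.1 < a ∧ p.2 < b ∧ ¬ DD T (a - 1 - p.1) (b - 1 - p.2) := by
  constructor
  · rintro ⟨i, j, hi, hj, hv, rfl⟩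
    refine ⟨by simp; omega, by simp; omega, ?_⟩
    simp only [Prod.fst, Prod.snd]
    rw [show a - 1 - ((a - 1 - i, b - 1 - j)).1 = i by simp; omega,
      show b - 1 - ((a - 1 - i, b - 1 - j)).2 = j by simp; omega,
      nDD_iff hT hi hj]
    exact hv
  · rintro ⟨h1, h2, h3⟩
    refine ⟨a - 1 - p.1, b - 1 - p.2, by omega, by omega,
      (nDD_iff hT (by omega) (by omega)).mp h3, ?_⟩
    rw [Prod.ext_iff]
    constructor <;> simp <;> omega

lemma mem_theta' (hT : IsInc a b (a + b) T) {i j : ℕ} (hi : i < a) (hj : j < b) :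
    (a - 1 - i, b - 1 - j) ∈ theta a b T ↔ T i j = i + j + 2 := by
  rw [mem_theta hT]
  have e : ¬ DD T (a - 1 - (a - 1 - i, b - 1 - j).1) (b - 1 - (a - 1 - i, b - 1 - j).2)
      ↔ T i j = i + j + 2 := by
    rw [show a - 1 - (a - 1 - i, b - 1 - j).1 = i by simp; omega,
      show b - 1 - (a - 1 - i, b - 1 - j).2 = j by simp; omega]
    exact nDD_iff hT hi hj
  constructor
  · rintro ⟨-, -, h⟩
    exact e.mp h
  · intro h
    exact ⟨by simp; omega, by simp; omega, e.mpr h⟩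

lemma theta_KPro (hT : IsInc a b (a + b) T) :
    theta a b (KPro a b (a + b) T)
      = {p : ℕ × ℕ | ∃ i j, i < a ∧ j < b ∧ UU a b T i j ∧ p = (a - 1 - i, b - 1 - j)} := by
  ext p
  constructor
  · rintro ⟨i, j, hi, hj, hval, rfl⟩
    refine ⟨i, j, hi, hj, ?_, rfl⟩
    rw [KPro_val hT hi hj] at hval
    by_contra hU
    rw [if_neg hU] at hval
    omega
  · rintro ⟨i, j, hi, hj, hU, rfl⟩
    exact ⟨i, j, hi, hj, by rw [KPro_val hT hi hj, if_pos hU], rfl⟩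

lemma row_theta (hT : IsInc a b (a + b) T) :
    Row a b (theta a b T)
      = {p : ℕ × ℕ | ∃ i j, i < a ∧ j < b ∧ UU a b T i j ∧ p = (a - 1 - i, b - 1 - j)} := by
  ext p
  simp only [Row, Set.mem_setOf_eq]
  constructor
  · rintro ⟨q, ⟨⟨hq1, hq2⟩, hqn⟩, hmin, hpq⟩
    have hqD : DD T (a - 1 - q.1) (b - 1 - q.2) := by
      by_contra hD
      exact hqn ((mem_theta hT).mpr ⟨hq1, hq2, hD⟩)
    have hMx : Mx a b T (a - 1 - q.1) (b - 1 - q.2) := by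
      refine ⟨by omega, by omega, hqD, ?_, ?_⟩
      · intro hlt hD2
        have hq1pos : 0 < q.1 := by omega
        have hr := hmin (q.1 - 1, q.2) ⟨by simp; omega, by simp; omega⟩ ?_ ?_
        · have := congrArg Prod.fst hr
          simp at this
          omega
        · intro hrI
          obtain ⟨-, -, hnd⟩ := (mem_theta hT).mp hrI
          rw [show a - 1 - ((q.1 - 1 : ℕ), q.2).1 = a - 1 - q.1 + 1 by simp; omega,
            show b - 1 - ((q.1 - 1 : ℕ), q.2).2 = b - 1 - q.2 by simp] at hnd
          exact hnd hD2
        · rw [Prod.le_def]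
          exact ⟨by simp, by simp⟩
      · intro hlt hD2
        have hq2pos : 0 < q.2 := by omega
        have hr := hmin (q.1, q.2 - 1) ⟨by simp; omega, by simp; omega⟩ ?_ ?_
        · have := congrArg Prod.snd hr
          simp at this
          omega
        · intro hrI
          obtain ⟨-, -, hnd⟩ := (mem_theta hT).mp hrI
          rw [show a - 1 - (q.1, (q.2 - 1 : ℕ)).1 = a - 1 - q.1 by simp,
            show b - 1 - (q.1, (q.2 - 1 : ℕ)).2 = b - 1 - q.2 + 1 by simp; omega] at hnd
          exact hnd hD2
        · rw [Prod.le_def]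
          exact ⟨by simp, by simp⟩
    obtain ⟨hp1, hp2⟩ := Prod.le_def.mp hpq
    refine ⟨a - 1 - p.1, b - 1 - p.2, by omega, by omega,
      ⟨a - 1 - q.1, b - 1 - q.2, by omega, by omega, hMx⟩, ?_⟩
    rw [Prod.ext_iff]
    constructor <;> simp <;> omega
  · rintro ⟨i, j, hi, hj, ⟨u, v, hui, hvj, hm⟩, rfl⟩
    have hua : u < a := hm.1
    have hvb : v < b := hm.2.1
    refine ⟨(a - 1 - u, b - 1 - v), ⟨⟨by simp; omega, by simp; omega⟩, ?_⟩, ?_, ?_⟩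
    · intro hmem
      obtain ⟨-, -, hnd⟩ := (mem_theta hT).mp hmem
      rw [show a - 1 - ((a : ℕ) - 1 - u, (b : ℕ) - 1 - v).1 = u by simp; omega,
        show b - 1 - ((a : ℕ) - 1 - u, (b : ℕ) - 1 - v).2 = v by simp; omega] at hnd
      exact hnd hm.2.2.1
    · intro r hrc hrn hrle
      have hrD : DD T (a - 1 - r.1) (b - 1 - r.2) := by
        by_contra hD
        exact hrn ((mem_theta hT).mpr ⟨hrc.1, hrc.2, hD⟩)
      obtain ⟨hle1, hle2⟩ := Prod.le_def.mp hrle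
      simp at hle1 hle2
      have hrc1 : r.1 < a := hrc.1
      have hrc2 : r.2 < b := hrc.2
      have hmx := Mx_max hT hm (show a - 1 - r.1 < a by omega) (show b - 1 - r.2 < b by omega)
        hrD (by omega) (by omega)
      rw [Prod.ext_iff]
      constructor <;> simp <;> omega
    · rw [Prod.le_def]
      exact ⟨by simp; omega, by simp; omega⟩

/-- The increasing tableau associated to an order ideal. -/
noncomputable def tabOf (a b : ℕ) (I : Set (ℕ × ℕ)) : ℕ → ℕ → ℕ := fun i j =>
  if i < a ∧ j < b then (if (a - 1 - i, b - 1 - j) ∈ I then i + j + 2 else i + j + 1) else 0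

lemma tabOf_inc (ha : 1 ≤ a) (hb : 1 ≤ b) {I : Set (ℕ × ℕ)} (hI : IsIdeal a b I) :
    IsInc a b (a + b) (tabOf a b I) := by
  refine ⟨?_, ?_, ?_, ?_⟩
  · intro i j hi hj
    unfold tabOf
    rw [if_pos ⟨hi, hj⟩]
    split_ifs <;> omega
  · intro i j j' hi hjj hj'
    have hjb : j < b := by omega
    have v1 : tabOf a b I i j
        = (if (a - 1 - i, b - 1 - j) ∈ I then i + j + 2 else i + j + 1) := by
      unfold tabOf; rw [if_pos ⟨hi, hjb⟩]
    have v2 : tabOf a b I i j'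
        = (if (a - 1 - i, b - 1 - j') ∈ I then i + j' + 2 else i + j' + 1) := by
      unfold tabOf; rw [if_pos ⟨hi, hj'⟩]
    rw [v1, v2]
    have hmono : (a - 1 - i, b - 1 - j) ∈ I → (a - 1 - i, b - 1 - j') ∈ I := by
      intro h
      exact hI.2 (a - 1 - i, b - 1 - j') (a - 1 - i, b - 1 - j) h
        (Prod.le_def.mpr ⟨by simp, by simp; omega⟩)
    split_ifs with h1 h2 h3 <;> first | omega | exact absurd (hmono h1) h2
  · intro i i' j hii hi' hj
    have hia : i < a := by omega
    have v1 : tabOf a b I i j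
        = (if (a - 1 - i, b - 1 - j) ∈ I then i + j + 2 else i + j + 1) := by
      unfold tabOf; rw [if_pos ⟨hia, hj⟩]
    have v2 : tabOf a b I i' j
        = (if (a - 1 - i', b - 1 - j) ∈ I then i' + j + 2 else i' + j + 1) := by
      unfold tabOf; rw [if_pos ⟨hi', hj⟩]
    rw [v1, v2]
    have hmono : (a - 1 - i, b - 1 - j) ∈ I → (a - 1 - i', b - 1 - j) ∈ I := by
      intro h
      exact hI.2 (a - 1 - i', b - 1 - j) (a - 1 - i, b - 1 - j) h
        (Prod.le_def.mpr ⟨by simp; omega, by simp⟩)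
    split_ifs with h1 h2 h3 <;> first | omega | exact absurd (hmono h1) h2
  · intro i j h
    unfold tabOf
    rw [if_neg h]

lemma theta_tabOf (ha : 1 ≤ a) (hb : 1 ≤ b) {I : Set (ℕ × ℕ)} (hI : IsIdeal a b I) :
    theta a b (tabOf a b I) = I := by
  ext p
  constructor
  · rintro ⟨i, j, hi, hj, hval, rfl⟩
    unfold tabOf at hval
    rw [if_pos ⟨hi, hj⟩] at hval
    split_ifs at hval with h
    · exact h
    · omega
  · intro hp
    have hc : p.1 < a ∧ p.2 < b := hI.1 p hp
    refine ⟨a - 1 - p.1, b - 1 - p.2, by omega, by omega, ?_, ?_⟩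
    · unfold tabOf
      rw [if_pos ⟨by omega, by omega⟩,
        show ((a : ℕ) - 1 - (a - 1 - p.1), (b : ℕ) - 1 - (b - 1 - p.2)) = p from
          Prod.ext_iff.mpr ⟨by simp; omega, by simp; omega⟩, if_pos hp]
    · rw [Prod.ext_iff]
      constructor <;> simp <;> omega

lemma theta_mapsTo (ha : 1 ≤ a) (hb : 1 ≤ b) (hT : IsInc a b (a + b) T) :
    IsIdeal a b (theta a b T) := by
  constructor
  · rintro p ⟨i, j, hi, hj, -, rfl⟩
    exact ⟨by simp; omega, by simp; omega⟩
  · intro p q hq hpq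
    obtain ⟨h1, h2, h3⟩ := (mem_theta hT).mp hq
    obtain ⟨hle1, hle2⟩ := Prod.le_def.mp hpq
    refine (mem_theta hT).mpr ⟨by omega, by omega, fun hD => h3 ?_⟩
    exact Ddc hT (show a - 1 - p.1 < a by omega) (show b - 1 - p.2 < b by omega)
      (by omega) (by omega) hD

end KProofAux

theorem stmt6 (a b : ℕ) (ha : 1 ≤ a) (hb : 1 ≤ b) :
    Set.BijOn (theta a b) {T : ℕ → ℕ → ℕ | IsInc a b (a + b) T}
      {I : Set (ℕ × ℕ) | IsIdeal a b I} ∧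
    ∀ T : ℕ → ℕ → ℕ, IsInc a b (a + b) T →
      theta a b (KPro a b (a + b) T) = Row a b (theta a b T) := by
  constructor
  · refine ⟨?_, ?_, ?_⟩
    · intro T hT
      exact theta_mapsTo ha hb hT
    · intro T1 h1 T2 h2 heq
      have h1' : IsInc a b (a + b) T1 := h1
      have h2' : IsInc a b (a + b) T2 := h2
      funext i j
      by_cases hc : i < a ∧ j < b
      · have e1 := mem_theta' h1' hc.1 hc.2
        have e2 := mem_theta' h2' hc.1 hc.2
        have hmem : ((a - 1 - i, b - 1 - j) ∈ theta a b T1)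
            ↔ ((a - 1 - i, b - 1 - j) ∈ theta a b T2) := by rw [heq]
        rw [e1, e2] at hmem
        have l1 := lbound h1' hc.1 hc.2
        have u1 := ubound h1' hc.1 hc.2
        have l2 := lbound h2' hc.1 hc.2
        have u2 := ubound h2' hc.1 hc.2
        omega
      · rw [h1'.2.2.2 i j hc, h2'.2.2.2 i j hc]
    · intro I hI
      have hI' : IsIdeal a b I := hI
      exact ⟨tabOf a b I, tabOf_inc ha hb hI', theta_tabOf ha hb hI'⟩
  · intro T hT
    rw [theta_KPro hT, row_theta hT]
end

section
/- For all integers a, b ≥ 1, the number of packed increasing tableaux of shape a×b with maximum entry exactly a+b equals C(a+b, a) − (a+b), where C denotes the ordinary binomial coefficient. -/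
open Polynomial

namespace S10

lemma key {a b m : ℕ} {T : ℕ → ℕ → ℕ} (hT : IsInc a b m T)
    {i i' j j' : ℕ} (hii : i ≤ i') (hjj : j ≤ j') (hi' : i' < a) (hj' : j' < b) :
    T i j + (i' - i) + (j' - j) ≤ T i' j' := by
  obtain ⟨hbd, hrow, hcol, _⟩ := hT
  have hcolstep : ∀ d, i + d < a → T i j + d ≤ T (i + d) j := by
    intro d
    induction d with
    | zero => simp
    | succ d ih =>
      intro h
      have h1 : i + d < a := by omega
      have h2 := hcol (i + d) (i + d + 1) j (by omega) (by omega) (by omega)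
      have h3 := ih h1
      have h4 : T (i + (d+1)) j = T (i + d + 1) j := rfl
      omega
  have hrowstep : ∀ d, j + d < b → T i' j + d ≤ T i' (j + d) := by
    intro d
    induction d with
    | zero => simp
    | succ d ih =>
      intro h
      have h1 : j + d < b := by omega
      have h2 := hrow i' (j + d) (j + d + 1) hi' (by omega) (by omega)
      have h3 := ih h1
      have h4 : T i' (j + (d+1)) = T i' (j + d + 1) := rfl
      omega
  have h1 := hcolstep (i' - i) (by omega)
  have h2 := hrowstep (j' - j) (by omega)
  rw [show i + (i' - i) = i' by omega] at h1
  rw [show j + (j' - j) = j' by omega] at h2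
  omega

lemma bounds {a b : ℕ} {T : ℕ → ℕ → ℕ} (hT : IsInc a b (a + b) T) {i j : ℕ}
    (hi : i < a) (hj : j < b) : i + j + 1 ≤ T i j ∧ T i j ≤ i + j + 2 := by
  have h00 : 1 ≤ T 0 0 := (hT.1 0 0 (by omega) (by omega)).1
  have hcorner : T (a-1) (b-1) ≤ a + b := (hT.1 (a-1) (b-1) (by omega) (by omega)).2
  have h1 := key hT (Nat.zero_le i) (Nat.zero_le j) hi hj
  have h2 := key hT (show i ≤ a-1 by omega) (show j ≤ b-1 by omega) (by omega : a-1 < a) (by omega : b-1 < b)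
  omega

def cnt (b : ℕ) (T : ℕ → ℕ → ℕ) (i : ℕ) : ℕ :=
  ((Finset.range b).filter (fun j => T i j = i + j + 1)).card

lemma cnt_le (b : ℕ) (T : ℕ → ℕ → ℕ) (i : ℕ) : cnt b T i ≤ b :=
  le_trans (Finset.card_filter_le _ _) (by simp)

lemma cnt_iff {a b : ℕ} {T : ℕ → ℕ → ℕ} (hT : IsInc a b (a + b) T) {i j : ℕ}
    (hi : i < a) (hj : j < b) : T i j = i + j + 1 ↔ j < cnt b T i := by
  constructor
  · intro h
    have hsub : Finset.range (j+1) ⊆ (Finset.range b).filter (fun j => T i j = i + j + 1) := by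
      intro k hk
      simp only [Finset.mem_range] at hk
      have hkb : k < b := by omega
      simp only [Finset.mem_filter, Finset.mem_range]
      have h1 := key hT (le_refl i) (show k ≤ j by omega) hi hj
      have h2 := (bounds hT hi hkb).1
      exact ⟨hkb, by omega⟩
    have h3 := Finset.card_le_card hsub
    simp only [Finset.card_range] at h3
    unfold cnt
    omega
  · intro h
    by_contra hne
    have hb2 := bounds hT hi hj
    have hsub : (Finset.range b).filter (fun j => T i j = i + j + 1) ⊆ Finset.range j := by
      intro k hk
      simp only [Finset.mem_filter, Finset.mem_range] at hk
      simp only [Finset.mem_range]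
      by_contra hkj
      have h1 := key hT (le_refl i) (show j ≤ k by omega) hi hk.1
      have h2 := (bounds hT hi hk.1).2
      omega
    have h3 := Finset.card_le_card hsub
    simp only [Finset.card_range] at h3
    unfold cnt at h
    omega

lemma cnt_anti {a b : ℕ} {T : ℕ → ℕ → ℕ} (hT : IsInc a b (a + b) T) {i i' : ℕ}
    (hii : i ≤ i') (hi' : i' < a) : cnt b T i' ≤ cnt b T i := by
  apply Finset.card_le_card
  intro k hk
  simp only [Finset.mem_filter, Finset.mem_range] at hk ⊢
  have h1 := key hT hii (le_refl k) hi' hk.1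
  have h2 := (bounds hT (by omega : i < a) hk.1).1
  exact ⟨hk.1, by omega⟩


def dfun (b : ℕ) (T : ℕ → ℕ → ℕ) (i : ℕ) : ℕ := b + i - cnt b T i

lemma dfun_lt {a b : ℕ} {T : ℕ → ℕ → ℕ} (hT : IsInc a b (a + b) T) {i i' : ℕ}
    (hii : i < i') (hi' : i' < a) : dfun b T i < dfun b T i' := by
  have h1 := cnt_anti hT (le_of_lt hii) hi'
  have h2 := cnt_le b T i
  unfold dfun; omega

def enc (a b : ℕ) (T : ℕ → ℕ → ℕ) : Finset ℕ := (Finset.range a).image (dfun b T)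

lemma enc_card {a b : ℕ} {T : ℕ → ℕ → ℕ} (hT : IsInc a b (a + b) T) :
    (enc a b T).card = a := by
  rw [enc, Finset.card_image_of_injOn, Finset.card_range]
  intro x hx y hy hxy
  simp only [Finset.coe_range, Set.mem_Iio] at hx hy
  rcases lt_trichotomy x y with h | h | h
  · exact absurd hxy (Nat.ne_of_lt (dfun_lt hT h hy))
  · exact h
  · exact absurd hxy.symm (Nat.ne_of_lt (dfun_lt hT h hx))

lemma enc_subset {a b : ℕ} (T : ℕ → ℕ → ℕ) (hb : 1 ≤ b) :
    enc a b T ⊆ Finset.range (a + b) := by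
  intro x hx
  simp only [enc, Finset.mem_image, Finset.mem_range] at hx ⊢
  obtain ⟨i, hi, rfl⟩ := hx
  unfold dfun; omega

lemma enc_inj {a b : ℕ} {T T' : ℕ → ℕ → ℕ} (hT : IsInc a b (a + b) T)
    (hT' : IsInc a b (a + b) T') (h : enc a b T = enc a b T') : T = T' := by
  have hcnt : ∀ i, i < a → cnt b T i = cnt b T' i := by
    intro i hi
    have hcard : (enc a b T).card = a := enc_card hT
    have hmem : ∀ x : Fin a, dfun b T x ∈ enc a b T := fun x =>
      Finset.mem_image_of_mem _ (Finset.mem_range.mpr x.2)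
    have hmem' : ∀ x : Fin a, dfun b T' x ∈ enc a b T := by
      intro x; rw [h]; exact Finset.mem_image_of_mem _ (Finset.mem_range.mpr x.2)
    have hsm : StrictMono (fun x : Fin a => dfun b T x) := fun x y hxy => dfun_lt hT hxy y.2
    have hsm' : StrictMono (fun x : Fin a => dfun b T' x) := fun x y hxy => dfun_lt hT' hxy y.2
    have e1 := Finset.orderEmbOfFin_unique hcard hmem hsm
    have e2 := Finset.orderEmbOfFin_unique hcard hmem' hsm'
    have e3 : dfun b T i = dfun b T' i := by
      have := congrFun (e1.trans e2.symm) ⟨i, hi⟩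
      simpa using this
    have c1 := cnt_le b T i
    have c1' := cnt_le b T' i
    unfold dfun at e3
    omega
  funext i j
  by_cases hij : i < a ∧ j < b
  · have b1 := bounds hT hij.1 hij.2
    have b1' := bounds hT' hij.1 hij.2
    have i1 := cnt_iff hT hij.1 hij.2
    have i1' := cnt_iff hT' hij.1 hij.2
    have heq := hcnt i hij.1
    rcases Nat.lt_or_ge j (cnt b T i) with hc | hc
    · rw [i1.mpr hc, i1'.mpr (by omega)]
    · have n1 : T i j ≠ i + j + 1 := fun he => by have := i1.mp he; omega
      have n2 : T' i j ≠ i + j + 1 := fun he => by have := i1'.mp he; omega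
      omega
  · rw [hT.2.2.2 i j hij, hT'.2.2.2 i j hij]

lemma fin_sm_le {n : ℕ} {g : Fin n → ℕ} (hg : StrictMono g) :
    ∀ (j : ℕ) (hj : j < n) (i : ℕ) (hi : i < n), i ≤ j → g ⟨i, hi⟩ + (j - i) ≤ g ⟨j, hj⟩ := by
  intro j
  induction j with
  | zero =>
    intro hj i hi hij
    obtain rfl : i = 0 := by omega
    exact Nat.le_of_eq rfl
  | succ j ih =>
    intro hj i hi hij
    rcases Nat.eq_or_lt_of_le hij with hcase | hcase
    · subst hcase; simp
    · have h1 : j < n := by omega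
      have h2 := ih h1 i hi (by omega)
      have h3 : g ⟨j, h1⟩ < g ⟨j+1, hj⟩ := hg (Fin.mk_lt_mk.mpr (by omega))
      omega

lemma enc_surj {a b : ℕ} (ha : 1 ≤ a) (hb : 1 ≤ b) (s : Finset ℕ)
    (hs1 : s ⊆ Finset.range (a + b)) (hs2 : s.card = a) :
    ∃ T, IsInc a b (a + b) T ∧ enc a b T = s := by
  classical
  set f := s.orderEmbOfFin hs2 with hfdef
  have hsm : StrictMono f := (s.orderEmbOfFin hs2).strictMono
  have hmem : ∀ x : Fin a, f x ∈ s := fun x => s.orderEmbOfFin_mem hs2 x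
  have hub : ∀ x : Fin a, f x < a + b := fun x => Finset.mem_range.mp (hs1 (hmem x))
  set F : ℕ → ℕ := fun i => if h : i < a then f ⟨i, h⟩ else 0 with hFdef
  have hFval : ∀ (i : ℕ) (hi : i < a), F i = f ⟨i, hi⟩ := by
    intro i hi; simp only [hFdef]; rw [dif_pos hi]
  have hFmem : ∀ i, i < a → F i ∈ s := by
    intro i hi; rw [hFval i hi]; exact hmem _
  have hFlow : ∀ i, i < a → i ≤ F i := by
    intro i hi
    have h0 : (0:ℕ) < a := by omega
    have := fin_sm_le hsm i hi 0 h0 (by omega)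
    rw [hFval i hi]; omega
  have hFhigh : ∀ i, i < a → F i ≤ b + i := by
    intro i hi
    have h1 := fin_sm_le hsm (a-1) (by omega) i hi (by omega)
    have h2 := hub ⟨a-1, by omega⟩
    rw [hFval i hi]; omega
  have hFstep : ∀ i i', i ≤ i' → i' < a → F i + (i' - i) ≤ F i' := by
    intro i i' hii hi'
    have h1 := fin_sm_le hsm i' hi' i (by omega) hii
    rw [hFval i (by omega), hFval i' hi']; exact h1
  set T : ℕ → ℕ → ℕ := fun i j =>
    if i < a ∧ j < b then (if j + F i < b + i then i + j + 1 else i + j + 2) else 0 with hTdef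
  have hTval : ∀ i j, i < a → j < b →
      T i j = if j + F i < b + i then i + j + 1 else i + j + 2 := by
    intro i j hi hj; simp only [hTdef]; rw [if_pos ⟨hi, hj⟩]
  have hTinc : IsInc a b (a + b) T := by
    refine ⟨?_, ?_, ?_, ?_⟩
    · intro i j hi hj
      rw [hTval i j hi hj]
      split <;> omega
    · intro i j j' hi hjj hj'
      rw [hTval i j hi (by omega), hTval i j' hi hj']
      split <;> split <;> omega
    · intro i i' j hii hi' hj
      have hs := hFstep i i' (by omega) hi'
      rw [hTval i j (by omega) hj, hTval i' j hi' hj]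
      split <;> split <;> omega
    · intro i j hij
      simp only [hTdef]; rw [if_neg hij]
  refine ⟨T, hTinc, ?_⟩
  have hcnt : ∀ i, i < a → cnt b T i = b + i - F i := by
    intro i hi
    have hfilter : (Finset.range b).filter (fun j => T i j = i + j + 1)
        = Finset.range (b + i - F i) := by
      ext k
      simp only [Finset.mem_filter, Finset.mem_range]
      constructor
      · rintro ⟨hk, he⟩
        rw [hTval i k hi hk] at he
        by_cases hcase : k + F i < b + i
        · omega
        · rw [if_neg hcase] at he; omega
      · intro hk
        have hklt : k < b := by have := hFlow i hi; omega
        refine ⟨hklt, ?_⟩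
        rw [hTval i k hi hklt, if_pos (by omega)]
    rw [cnt, hfilter, Finset.card_range]
  have hdfun : ∀ i, i < a → dfun b T i = F i := by
    intro i hi
    have h1 := hcnt i hi
    have h2 := hFhigh i hi
    unfold dfun; omega
  have hsub : enc a b T ⊆ s := by
    intro x hx
    simp only [enc, Finset.mem_image, Finset.mem_range] at hx
    obtain ⟨i, hi, rfl⟩ := hx
    rw [hdfun i hi]
    exact hFmem i hi
  exact Finset.eq_of_subset_of_card_le hsub (by rw [enc_card hTinc, hs2])


def stc (a b v : ℕ) : ℕ → ℕ → ℕ := fun i j =>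
  if i < a ∧ j < b then (if i + j + 2 ≤ v then i + j + 1 else i + j + 2) else 0

lemma stc_val {a b v i j : ℕ} (hi : i < a) (hj : j < b) :
    stc a b v i j = if i + j + 2 ≤ v then i + j + 1 else i + j + 2 := by
  unfold stc; rw [if_pos ⟨hi, hj⟩]

lemma stc_inc {a b : ℕ} (ha : 1 ≤ a) (hb : 1 ≤ b) (v : ℕ) : IsInc a b (a + b) (stc a b v) := by
  refine ⟨?_, ?_, ?_, ?_⟩
  · intro i j hi hj; rw [stc_val hi hj]; split <;> omega
  · intro i j j' hi hjj hj'
    rw [stc_val hi (show j < b by omega), stc_val hi hj']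
    split <;> split <;> omega
  · intro i i' j hii hi' hj
    rw [stc_val (show i < a by omega) hj, stc_val hi' hj]
    split <;> split <;> omega
  · intro i j hij; unfold stc; rw [if_neg hij]

lemma stc_unpacked {a b v : ℕ} (hv1 : 1 ≤ v) (hv2 : v ≤ a + b) :
    ¬ IsPacked a b (a + b) (stc a b v) := by
  intro hp
  obtain ⟨i, j, hi, hj, he⟩ := hp v hv1 hv2
  rw [stc_val hi hj] at he
  split at he <;> omega

lemma bad_eq {a b : ℕ} (ha : 1 ≤ a) (hb : 1 ≤ b) :
    {T : ℕ → ℕ → ℕ | IsInc a b (a + b) T ∧ ¬ IsPacked a b (a + b) T}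
      = stc a b '' Set.Icc 1 (a + b) := by
  ext T
  simp only [Set.mem_setOf_eq, Set.mem_image, Set.mem_Icc]
  constructor
  · rintro ⟨hT, hnp⟩
    unfold IsPacked at hnp
    push_neg at hnp
    obtain ⟨v, hv1, hv2, hmiss⟩ := hnp
    refine ⟨v, ⟨hv1, hv2⟩, ?_⟩
    funext i j
    by_cases hij : i < a ∧ j < b
    · obtain ⟨hi, hj⟩ := hij
      rw [stc_val hi hj]
      have b1 := bounds hT hi hj
      by_cases hle : i + j + 2 ≤ v
      · rw [if_pos hle]
        -- find cell (i'', j'') ≥ (i,j) on diagonal v - 2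
        set i'' := min (a - 1) (v - 2 - j) with hi''
        set j'' := v - 2 - i'' with hj''
        have hc : i ≤ i'' ∧ j ≤ j'' ∧ i'' < a ∧ j'' < b ∧ i'' + j'' = v - 2 := by omega
        have b2 := bounds hT hc.2.2.1 hc.2.2.2.1
        have hne := hmiss i'' j'' hc.2.2.1 hc.2.2.2.1
        have hk := key hT hc.1 hc.2.1 hc.2.2.1 hc.2.2.2.1
        omega
      · rw [if_neg hle]
        -- find cell (i', j') ≤ (i,j) on diagonal v - 1
        set i' := min i (v - 1) with hi'
        set j' := v - 1 - i' with hj'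
        have hc : i' ≤ i ∧ j' ≤ j ∧ i' + j' = v - 1 := by omega
        have hia : i' < a := by omega
        have hjb : j' < b := by omega
        have b2 := bounds hT hia hjb
        have hne := hmiss i' j' hia hjb
        have hk := key hT hc.1 hc.2.1 hi hj
        omega
    · rw [hT.2.2.2 i j hij]
      unfold stc; rw [if_neg hij]
  · rintro ⟨v, ⟨hv1, hv2⟩, rfl⟩
    exact ⟨stc_inc ha hb v, stc_unpacked hv1 hv2⟩

lemma stc_ne {a b : ℕ} (ha : 1 ≤ a) (hb : 1 ≤ b) {v v' : ℕ} (hv : 1 ≤ v)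
    (hv' : v' ≤ a + b) (hlt : v < v') : stc a b v ≠ stc a b v' := by
  intro he
  -- pick a cell with i + j = v' - 2
  set i := min (a - 1) (v' - 2) with hi
  set j := v' - 2 - i with hj
  have hia : i < a := by omega
  have hjb : j < b := by omega
  have hsum : i + j = v' - 2 := by omega
  have h1 := congrFun (congrFun he i) j
  rw [stc_val hia hjb, stc_val hia hjb] at h1
  rw [if_neg (by omega), if_pos (by omega)] at h1
  omega

lemma stc_injOn {a b : ℕ} (ha : 1 ≤ a) (hb : 1 ≤ b) :
    Set.InjOn (stc a b) (Set.Icc 1 (a + b)) := by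
  intro v hv v' hv' he
  simp only [Set.mem_Icc] at hv hv'
  rcases lt_trichotomy v v' with h | h | h
  · exact absurd he (stc_ne ha hb hv.1 hv'.2 h)
  · exact h
  · exact absurd he.symm (stc_ne ha hb hv'.1 hv.2 h)

end S10

theorem stmt10 (a b : ℕ) (ha : 1 ≤ a) (hb : 1 ≤ b) :
    {T : ℕ → ℕ → ℕ | IsInc a b (a + b) T ∧ IsPacked a b (a + b) T}.ncard
      = Nat.choose (a + b) a - (a + b) := by
  classical
  set A := {T : ℕ → ℕ → ℕ | IsInc a b (a + b) T} with hA
  set Bad := {T : ℕ → ℕ → ℕ | IsInc a b (a + b) T ∧ ¬ IsPacked a b (a + b) T} with hBad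
  have hset : {T : ℕ → ℕ → ℕ | IsInc a b (a + b) T ∧ IsPacked a b (a + b) T} = A \ Bad := by
    ext T
    simp only [hA, hBad, Set.mem_setOf_eq, Set.mem_diff]
    tauto
  have hinjA : Set.InjOn (S10.enc a b) A := fun T hT T' hT' h => S10.enc_inj hT hT' h
  have himg : S10.enc a b '' A = ↑((Finset.range (a + b)).powersetCard a) := by
    ext s
    simp only [Set.mem_image, Finset.mem_coe, Finset.mem_powersetCard, Set.mem_setOf_eq, hA]
    constructor
    · rintro ⟨T, hT, rfl⟩
      exact ⟨S10.enc_subset T hb, S10.enc_card hT⟩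
    · rintro ⟨h1, h2⟩
      obtain ⟨T, hT, he⟩ := S10.enc_surj ha hb s h1 h2
      exact ⟨T, hT, he⟩
  have hAcard : A.ncard = Nat.choose (a + b) a := by
    have h1 := Set.ncard_image_of_injOn hinjA
    rw [himg, Set.ncard_coe_finset, Finset.card_powersetCard, Finset.card_range] at h1
    exact h1.symm
  have hBcard : Bad.ncard = a + b := by
    rw [hBad, S10.bad_eq ha hb, Set.ncard_image_of_injOn (S10.stc_injOn ha hb),
      ← Finset.coe_Icc, Set.ncard_coe_finset, Nat.card_Icc]
    omega
  have hBfin : Bad.Finite := by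
    rw [hBad, S10.bad_eq ha hb]
    exact ((Set.finite_Icc 1 (a + b)).image _)
  have hBsub : Bad ⊆ A := fun T hT => hT.1
  rw [hset, Set.ncard_diff hBsub hBfin, hAcard, hBcard]
end

section
/- For every integer k ≥ 2, the map sending a standard Young tableau T of shape (2,2,2,1^{k−2}) to the set {T(1,2), T(2,2), T(3,2)} of its second-column entries is injective, and its image is exactly the collection of 3-element subsets of {2,3,…,k+4} other than the k+3 exceptional subsets {2,3,j} for 4 ≤ j ≤ k+4, {2,4,5}, and {3,4,5}. -/
open Polynomial

/-!
The first column of a standard tableau of shape `(2,2,2,1^(k-2))` is increasing and consists of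
the values in `{1, …, k+4}` not used by the second column, so the tableau is determined by its
second-column entries `b₀ < b₁ < b₂`. Conversely, listing that complement increasingly down the
first column gives a standard tableau exactly when `T(i,0) < bᵢ` for `i < 3`. Below `bᵢ` there are
`bᵢ - 1` positive values, `i` of them taken by the second column, so this holds iff
`bᵢ - 1 - i ≥ i + 1`, i.e. `bᵢ ≥ 2i + 2`. Among the triples in `{2, …, k+4}` these ballot
conditions exclude exactly `{2,3,j}`, `{2,4,5}` and `{3,4,5}`.
-/

open Finset

theorem Finset.exists_lt_lt_eq_of_card_eq_three {s : Finset ℕ} (h : #s = 3) :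
    ∃ a b c, a < b ∧ b < c ∧ s = {a, b, c} := by
  let f := s.orderEmbOfFin h
  refine ⟨f 0, f 1, f 2, f.strictMono (by decide), f.strictMono (by decide), ?_⟩
  rw [← s.image_orderEmbOfFin_univ h]
  simp [Fin.univ_succ, f]

theorem Finset.eq_of_insert_insert_singleton_eq {a b c d e f : ℕ} (hab : a < b) (hbc : b < c)
    (hde : d < e) (hef : e < f) (h : ({a, b, c} : Finset ℕ) = {d, e, f}) :
    a = d ∧ b = e ∧ c = f := by
  have H := Finset.ext_iff.mp h
  simp only [mem_insert, mem_singleton] at H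
  have := H a; have := H b; have := H c; have := H d; have := H e; have := H f
  omega

namespace Nat

theorem count_notMem_add_card_filter_lt (S : Finset ℕ) (n : ℕ) :
    count (· ∉ S) n + #{x ∈ S | x < n} = n := by
  have hS : #{x ∈ S | x < n} = #{x ∈ range n | x ∈ S} := by
    congr 1; ext x; simp [and_comm]
  rw [count_eq_card_filter_range, hS, add_comm, card_filter_add_card_filter_not, card_range]

theorem nth_notMem_lt {S : Finset ℕ} {i n : ℕ} (h : i + #{x ∈ S | x < n} < n) :
    nth (· ∉ S) i < n :=
  nth_lt_of_lt_count (by have := count_notMem_add_card_filter_lt S n; omega)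

theorem strictMono_nth_notMem (S : Finset ℕ) : StrictMono (nth (· ∉ S)) :=
  nth_strictMono S.finite_toSet.infinite_compl

theorem nth_notMem (S : Finset ℕ) (i : ℕ) : nth (· ∉ S) i ∉ S :=
  nth_mem_of_infinite S.finite_toSet.infinite_compl i

end Nat

def admissibleTriples (k : ℕ) : Set (Finset ℕ) :=
  {s : Finset ℕ | s.card = 3 ∧ (∀ v ∈ s, 2 ≤ v ∧ v ≤ k + 4) ∧
    ¬ ((∃ j, 4 ≤ j ∧ j ≤ k + 4 ∧ s = {2, 3, j}) ∨ s = {2, 4, 5} ∨ s = {3, 4, 5})}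

theorem mem_admissibleTriples_iff {k b₀ b₁ b₂ : ℕ} (h₀₁ : b₀ < b₁) (h₁₂ : b₁ < b₂) :
    {b₀, b₁, b₂} ∈ admissibleTriples k ↔ 2 ≤ b₀ ∧ 4 ≤ b₁ ∧ 6 ≤ b₂ ∧ b₂ ≤ k + 4 := by
  have eq_iff {d e f : ℕ} (hde : d < e) (hef : e < f) : ({b₀, b₁, b₂} : Finset ℕ) = {d, e, f} ↔
      b₀ = d ∧ b₁ = e ∧ b₂ = f :=
    ⟨eq_of_insert_insert_singleton_eq h₀₁ h₁₂ hde hef, by rintro ⟨rfl, rfl, rfl⟩; rfl⟩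
  simp only [admissibleTriples, Set.mem_ofPred_eq, mem_insert, mem_singleton, forall_eq_or_imp,
    forall_eq, eq_iff (by omega : 2 < 4) (by omega : 4 < 5),
    eq_iff (by omega : 3 < 4) (by omega : 4 < 5)]
  constructor
  · rintro ⟨-, hb, hexc⟩
    have h₁ : 4 ≤ b₁ := by
      by_contra
      exact hexc (Or.inl ⟨b₂, by omega, hb.2.2.2,
        (eq_iff (by omega) (by omega)).2 ⟨by omega, by omega, rfl⟩⟩)
    exact ⟨hb.1.1, h₁, by omega, hb.2.2.2⟩
  · rintro ⟨h₀, h₁, h₂, hb⟩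
    refine ⟨card_eq_three.2 ⟨b₀, b₁, b₂, by omega, by omega, by omega, rfl⟩, by omega, ?_⟩
    rintro (⟨j, hj, -, hs⟩ | _ | _)
    · rw [eq_iff (by omega) (by omega)] at hs; omega
    all_goals omega

theorem tCell_of_lt {k i j : ℕ} (hi : i < 3 := by omega) (hj : j < 2 := by omega) :
    TCell k (i, j) :=
  Or.inl ⟨hi, hj⟩

theorem TCell.of_le {k i i' j : ℕ} (h : TCell k (i', j)) (hi : i ≤ i') : TCell k (i, j) := by
  unfold TCell at *; omega

theorem tCell_iff {k i j : ℕ} (hk : 2 ≤ k) :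
    TCell k (i, j) ↔ (j = 0 ∧ i < k + 1) ∨ (j = 1 ∧ i < 3) := by
  unfold TCell; omega

namespace IsToothSYT

variable {k : ℕ} {T : ℕ × ℕ → ℕ}

theorem lt_right (hT : IsToothSYT k T) {i : ℕ} (hi : i < 3) : T (i, 0) < T (i, 1) :=
  hT.2.1 i 0 1 one_pos tCell_of_lt tCell_of_lt

theorem lt_below (hT : IsToothSYT k T) {i i' j : ℕ} (h : i < i') (hi' : TCell k (i', j)) :
    T (i, j) < T (i', j) :=
  hT.2.2.1 i i' j h (hi'.of_le h.le) hi'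

theorem ne (hT : IsToothSYT k T) {p q : ℕ × ℕ} (hp : TCell k p) (hq : TCell k q) (hpq : p ≠ q) :
    T p ≠ T q :=
  hT.1.2.1.ne hp hq hpq

theorem second_column_bounds (hT : IsToothSYT k T) :
    T (0, 1) < T (1, 1) ∧ T (1, 1) < T (2, 1) ∧
      2 ≤ T (0, 1) ∧ 4 ≤ T (1, 1) ∧ 6 ≤ T (2, 1) ∧ T (2, 1) ≤ k + 4 := by
  have := (hT.1.1 (tCell_of_lt (i := 0) (j := 0))).1
  have := (hT.1.1 (tCell_of_lt (i := 2) (j := 1))).2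
  have : T (0, 0) < T (0, 1) := hT.lt_right (by omega)
  have : T (1, 0) < T (1, 1) := hT.lt_right (by omega)
  have : T (2, 0) < T (2, 1) := hT.lt_right (by omega)
  have : T (0, 0) < T (1, 0) := hT.lt_below (by omega) tCell_of_lt
  have : T (1, 0) < T (2, 0) := hT.lt_below (by omega) tCell_of_lt
  have : T (0, 1) < T (1, 1) := hT.lt_below (by omega) tCell_of_lt
  have : T (1, 1) < T (2, 1) := hT.lt_below (by omega) tCell_of_lt
  have : T (1, 0) ≠ T (0, 1) := hT.ne tCell_of_lt tCell_of_lt (by simp)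
  have : T (2, 0) ≠ T (0, 1) := hT.ne tCell_of_lt tCell_of_lt (by simp)
  have : T (2, 0) ≠ T (1, 1) := hT.ne tCell_of_lt tCell_of_lt (by simp)
  omega

theorem strictMono_first_column (hk : 2 ≤ k) (hT : IsToothSYT k T) :
    StrictMono fun i : Fin (k + 1) => T (i, 0) :=
  fun _ i' h => hT.lt_below h ((tCell_iff hk).2 (Or.inl ⟨rfl, i'.2⟩))

theorem range_first_column (hk : 2 ≤ k) (hT : IsToothSYT k T) :
    Set.range (fun i : Fin (k + 1) => T (i, 0)) =
      Set.Icc 1 (k + 4) \ {T (0, 1), T (1, 1), T (2, 1)} := by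
  ext v
  constructor
  · rintro ⟨i, rfl⟩
    have hi : TCell k (i, 0) := (tCell_iff hk).2 (Or.inl ⟨rfl, i.2⟩)
    refine ⟨hT.1.1 hi, ?_⟩
    rintro (h | h | h) <;> exact hT.ne hi tCell_of_lt (by simp) h
  · rintro ⟨hv, hv'⟩
    obtain ⟨⟨i, j⟩, hp, rfl⟩ := hT.1.2.2 hv
    rcases (tCell_iff hk).1 hp with ⟨rfl, hi⟩ | ⟨rfl, hi⟩
    · exact ⟨⟨i, hi⟩, rfl⟩
    · interval_cases i <;> simp at hv'

theorem eq_of_second_column_eq (hk : 2 ≤ k) {T' : ℕ × ℕ → ℕ} (hT : IsToothSYT k T)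
    (hT' : IsToothSYT k T') (h₀ : T (0, 1) = T' (0, 1)) (h₁ : T (1, 1) = T' (1, 1))
    (h₂ : T (2, 1) = T' (2, 1)) : T = T' := by
  have hcol : (fun i : Fin (k + 1) => T (i, 0)) = fun i : Fin (k + 1) => T' (i, 0) :=
    ((hT.strictMono_first_column hk).range_inj (hT'.strictMono_first_column hk)).1 <| by
      rw [hT.range_first_column hk, hT'.range_first_column hk, h₀, h₁, h₂]
  funext ⟨i, j⟩
  by_cases hp : TCell k (i, j)
  · rcases (tCell_iff hk).1 hp with ⟨rfl, hi⟩ | ⟨rfl, hi⟩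
    · exact congrFun hcol ⟨i, hi⟩
    · interval_cases i <;> assumption
  · rw [hT.2.2.2 _ hp, hT'.2.2.2 _ hp]

end IsToothSYT

/-- `0` is excluded together with the second column so that the first column starts at `1`. -/
noncomputable def toothOfSecondColumn (k b₀ b₁ b₂ : ℕ) : ℕ × ℕ → ℕ := fun p =>
  if p.2 = 0 ∧ p.1 < k + 1 then Nat.nth (· ∉ ({0, b₀, b₁, b₂} : Finset ℕ)) p.1
  else if p = (0, 1) then b₀ else if p = (1, 1) then b₁ else if p = (2, 1) then b₂ else 0

section toothOfSecondColumn

variable {k b₀ b₁ b₂ : ℕ}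

theorem toothOfSecondColumn_first {i : ℕ} (hi : i < k + 1) :
    toothOfSecondColumn k b₀ b₁ b₂ (i, 0) = Nat.nth (· ∉ ({0, b₀, b₁, b₂} : Finset ℕ)) i :=
  if_pos ⟨rfl, hi⟩

@[simp]
theorem toothOfSecondColumn_zero_one : toothOfSecondColumn k b₀ b₁ b₂ (0, 1) = b₀ := by
  simp [toothOfSecondColumn]

@[simp]
theorem toothOfSecondColumn_one_one : toothOfSecondColumn k b₀ b₁ b₂ (1, 1) = b₁ := by
  simp [toothOfSecondColumn]

@[simp]
theorem toothOfSecondColumn_two_one : toothOfSecondColumn k b₀ b₁ b₂ (2, 1) = b₂ := by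
  simp [toothOfSecondColumn]

theorem bijOn_toothOfSecondColumn (hk : 2 ≤ k) (h₀₁ : b₀ < b₁) (h₁₂ : b₁ < b₂) (h₀ : 1 ≤ b₀)
    (hb : b₂ ≤ k + 4) :
    Set.BijOn (toothOfSecondColumn k b₀ b₁ b₂) {p | TCell k p} (Set.Icc 1 (k + 4)) := by
  set S : Finset ℕ := {0, b₀, b₁, b₂}
  set c := Nat.nth (· ∉ S)
  have hT₀ {i : ℕ} (hi : i < k + 1) : toothOfSecondColumn k b₀ b₁ b₂ (i, 0) = c i :=
    toothOfSecondColumn_first hi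
  have hc (i : ℕ) : c i ∉ S := Nat.nth_notMem S i
  have hcount : Nat.count (· ∉ S) (k + 5) = k + 1 := by
    have hS : #{x ∈ S | x < k + 5} = 4 := by
      rw [filter_true_of_mem (by simp [S]; omega), card_insert_of_notMem (by simp; omega),
        card_insert_of_notMem (by simp; omega), card_pair (by omega)]
    have := Nat.count_notMem_add_card_filter_lt S (k + 5); omega
  have hne {i i' : ℕ} (hi : i < k + 1) (hi' : i' < 3) :
      toothOfSecondColumn k b₀ b₁ b₂ (i, 0) ≠ toothOfSecondColumn k b₀ b₁ b₂ (i', 1) := by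
    rw [hT₀ hi]
    intro h
    interval_cases i' <;> simp only [toothOfSecondColumn_zero_one, toothOfSecondColumn_one_one,
      toothOfSecondColumn_two_one] at h <;> exact hc i (by rw [h]; simp [S])
  refine ⟨?mapsTo, ?injOn, ?surjOn⟩
  case mapsTo =>
    rintro ⟨i, j⟩ hp
    rcases (tCell_iff hk).1 hp with ⟨rfl, hi⟩ | ⟨rfl, hi⟩
    · have : c i ≠ 0 := fun h => hc i (by rw [h]; simp [S])
      have : c i < k + 5 := Nat.nth_lt_of_lt_count (by omega)
      simp only [hT₀ hi, Set.mem_Icc]; omega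
    · interval_cases i <;> simp <;> omega
  case injOn =>
    rintro ⟨i, j⟩ hp ⟨i', j'⟩ hq heq
    rcases (tCell_iff hk).1 hp with ⟨rfl, hi⟩ | ⟨rfl, hi⟩ <;>
      rcases (tCell_iff hk).1 hq with ⟨rfl, hi'⟩ | ⟨rfl, hi'⟩
    · rw [hT₀ hi, hT₀ hi'] at heq
      rw [(Nat.strictMono_nth_notMem S).injective heq]
    · exact absurd heq (hne hi hi')
    · exact absurd heq.symm (hne hi' hi)
    · interval_cases i <;> interval_cases i' <;> simp at heq ⊢ <;> omega
  case surjOn =>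
    intro v hv
    by_cases hvS : v ∈ S
    · simp only [S, mem_insert, mem_singleton] at hvS
      rcases hvS with rfl | rfl | rfl | rfl
      · exact absurd hv.1 (by norm_num)
      · exact ⟨(0, 1), tCell_of_lt, toothOfSecondColumn_zero_one⟩
      · exact ⟨(1, 1), tCell_of_lt, toothOfSecondColumn_one_one⟩
      · exact ⟨(2, 1), tCell_of_lt, toothOfSecondColumn_two_one⟩
    · have hlt : Nat.count (· ∉ S) v < k + 1 := hcount ▸ Nat.count_strict_mono hvS (by grind)
      exact ⟨(Nat.count (· ∉ S) v, 0), Or.inr ⟨hlt, rfl⟩, (hT₀ hlt).trans (Nat.nth_count hvS)⟩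

theorem isToothSYT_toothOfSecondColumn (h₀₁ : b₀ < b₁) (h₁₂ : b₁ < b₂) (h₀ : 2 ≤ b₀)
    (h₁ : 4 ≤ b₁) (h₂ : 6 ≤ b₂) (hb : b₂ ≤ k + 4) :
    IsToothSYT k (toothOfSecondColumn k b₀ b₁ b₂) := by
  set S : Finset ℕ := {0, b₀, b₁, b₂}
  set c := Nat.nth (· ∉ S)
  have hk : 2 ≤ k := by omega
  have hT₀ {i : ℕ} (hi : i < k + 1) : toothOfSecondColumn k b₀ b₁ b₂ (i, 0) = c i :=
    toothOfSecondColumn_first hi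
  refine ⟨bijOn_toothOfSecondColumn hk h₀₁ h₁₂ (by omega) hb, ?rows, ?columns, ?outside⟩
  case rows =>
    intro i j j' hj hp hq
    obtain ⟨rfl, rfl, hi⟩ : j = 0 ∧ j' = 1 ∧ i < 3 := by
      rw [tCell_iff hk] at hp hq; omega
    rw [hT₀ (by omega)]
    interval_cases i
    · rw [toothOfSecondColumn_zero_one]
      refine Nat.nth_notMem_lt ?_
      rw [show {x ∈ S | x < b₀} = {0} by ext; simp [S]; omega, card_singleton]
      omega
    · rw [toothOfSecondColumn_one_one]
      refine Nat.nth_notMem_lt ?_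
      rw [show {x ∈ S | x < b₁} = {0, b₀} by ext; simp [S]; omega, card_pair (by omega)]
      omega
    · rw [toothOfSecondColumn_two_one]
      refine Nat.nth_notMem_lt ?_
      rw [show {x ∈ S | x < b₂} = {0, b₀, b₁} by ext; simp [S]; omega,
        card_insert_of_notMem (by simp; omega), card_pair (by omega)]
      omega
  case columns =>
    intro i i' j hi hp hq
    rcases (tCell_iff hk).1 hq with ⟨rfl, hi'⟩ | ⟨rfl, hi'⟩
    · rw [hT₀ (by omega), hT₀ hi']
      exact Nat.strictMono_nth_notMem S hi
    · interval_cases i' <;> interval_cases i <;> simp <;> omega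
  case outside =>
    rintro ⟨i, j⟩ hp
    rw [tCell_iff hk] at hp
    simp only [toothOfSecondColumn, Prod.mk.injEq]
    split_ifs <;> omega

end toothOfSecondColumn

theorem stmt16 (k : ℕ) (hk : 2 ≤ k) :
    Set.InjOn (fun T : ℕ × ℕ → ℕ => ({T (0, 1), T (1, 1), T (2, 1)} : Finset ℕ))
      {T : ℕ × ℕ → ℕ | IsToothSYT k T} ∧
    (fun T : ℕ × ℕ → ℕ => ({T (0, 1), T (1, 1), T (2, 1)} : Finset ℕ)) ''
        {T : ℕ × ℕ → ℕ | IsToothSYT k T}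
      = {s : Finset ℕ | s.card = 3 ∧ (∀ v ∈ s, 2 ≤ v ∧ v ≤ k + 4) ∧
          ¬ ((∃ j, 4 ≤ j ∧ j ≤ k + 4 ∧ s = {2, 3, j}) ∨ s = {2, 4, 5} ∨ s = {3, 4, 5})} := by
  refine ⟨fun T hT T' hT' h => ?_, Set.ext fun s => ⟨?_, fun hs => ?_⟩⟩
  · obtain ⟨h₀₁, h₁₂, -⟩ := IsToothSYT.second_column_bounds hT
    obtain ⟨h₀₁', h₁₂', -⟩ := IsToothSYT.second_column_bounds hT'
    obtain ⟨e₀, e₁, e₂⟩ := eq_of_insert_insert_singleton_eq h₀₁ h₁₂ h₀₁' h₁₂' h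
    exact IsToothSYT.eq_of_second_column_eq hk hT hT' e₀ e₁ e₂
  · rintro ⟨T, hT, rfl⟩
    obtain ⟨h₀₁, h₁₂, hb⟩ := IsToothSYT.second_column_bounds hT
    exact (mem_admissibleTriples_iff h₀₁ h₁₂).2 hb
  · obtain ⟨b₀, b₁, b₂, h₀₁, h₁₂, rfl⟩ := exists_lt_lt_eq_of_card_eq_three hs.1
    obtain ⟨h₀, h₁, h₂, hb⟩ := (mem_admissibleTriples_iff h₀₁ h₁₂).1 hs
    exact ⟨_, isToothSYT_toothOfSecondColumn h₀₁ h₁₂ h₀ h₁ h₂ hb, by simp⟩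
end

section
/- For all integers a, b ≥ 1, rowmotion on the set of order ideals of the poset [a]×[b] has order dividing a+b; that is, Row^{a+b}(I) = I for every order ideal I of [a]×[b]. -/
open Polynomial

namespace Pf18

def Good (a b : ℕ) (r : ℕ → ℕ) : Prop :=
  (∀ i, r (i + 1) ≤ r i) ∧ (∀ i, r i ≤ b) ∧ (∀ i, a ≤ i → r i = 0)

lemma Good.anti {a b : ℕ} {r : ℕ → ℕ} (h : Good a b r) {i j : ℕ} (hij : i ≤ j) :
    r j ≤ r i :=
  antitone_nat_of_succ_le h.1 hij

def Corner (a b : ℕ) (r : ℕ → ℕ) (k : ℕ) : Prop :=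
  k < a ∧ r k < b ∧ (k = 0 ∨ r k < r (k - 1))

def cset (a b : ℕ) (r : ℕ → ℕ) (i : ℕ) : Set ℕ := {k | i ≤ k ∧ Corner a b r k}

open Classical in
noncomputable def rowr (a b : ℕ) (r : ℕ → ℕ) : ℕ → ℕ := fun i =>
  if h : (cset a b r i).Nonempty then r (sInf (cset a b r i)) + 1 else 0

def toSet (a : ℕ) (r : ℕ → ℕ) : Set (ℕ × ℕ) := {p | p.1 < a ∧ p.2 < r p.1}

noncomputable def rfun (I : Set (ℕ × ℕ)) : ℕ → ℕ := fun i => sInf {j | (i, j) ∉ I}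

def Wrd (a : ℕ) (r : ℕ → ℕ) (p : ℕ) : Prop :=
  if p < a then r (p + 1) < r p else ∀ k, r k ≠ p - a + 1

/-- membership in toSet -/
lemma mem_toSet {a : ℕ} {r : ℕ → ℕ} {p : ℕ × ℕ} :
    p ∈ toSet a r ↔ p.1 < a ∧ p.2 < r p.1 := Iff.rfl

lemma good_toSet_ideal {a b : ℕ} {r : ℕ → ℕ} (h : Good a b r) :
    IsIdeal a b (toSet a r) := by
  constructor
  · rintro ⟨i, j⟩ ⟨h1, h2⟩
    exact ⟨h1, lt_of_lt_of_le h2 (h.2.1 i)⟩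
  · rintro ⟨i, j⟩ ⟨i', j'⟩ ⟨h1, h2⟩ hle
    rw [Prod.mk_le_mk] at hle
    exact ⟨lt_of_le_of_lt hle.1 h1, lt_of_le_of_lt hle.2 (lt_of_lt_of_le h2 (h.anti hle.1))⟩

lemma ideal_eq_toSet {a b : ℕ} {I : Set (ℕ × ℕ)} (hI : IsIdeal a b I) :
    I = toSet a (rfun I) ∧ Good a b (rfun I) := by
  have hne : ∀ i : ℕ, {j | (i, j) ∉ I}.Nonempty := by
    intro i
    refine ⟨b, fun hmem => ?_⟩
    exact absurd (hI.1 _ hmem).2 (lt_irrefl b)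
  have hmem : ∀ i j : ℕ, (i, j) ∈ I ↔ j < rfun I i := by
    intro i j
    constructor
    · intro h
      by_contra hc
      push_neg at hc
      have h1 : (i, sInf {j | (i, j) ∉ I}) ∉ I := Nat.sInf_mem (hne i)
      exact h1 (hI.2 _ _ h (Prod.mk_le_mk.mpr ⟨le_refl _, hc⟩))
    · intro h
      by_contra hc
      exact absurd (Nat.sInf_le (show j ∈ {j | (i, j) ∉ I} from hc)) (not_le_of_gt h)
  constructor
  · ext ⟨i, j⟩
    simp only [mem_toSet]
    constructor
    · intro h; exact ⟨(hI.1 _ h).1, (hmem i j).1 h⟩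
    · intro h; exact (hmem i j).2 h.2
  · refine ⟨?_, ?_, ?_⟩
    · intro i
      apply Nat.sInf_le
      intro hmem'
      exact Nat.sInf_mem (hne i) (hI.2 _ _ hmem' (Prod.mk_le_mk.mpr ⟨Nat.le_succ i, le_refl _⟩))
    · intro i
      apply Nat.sInf_le
      intro hmem'
      exact absurd (hI.1 _ hmem').2 (lt_irrefl b)
    · intro i hia
      have : (0 : ℕ) ∈ {j | (i, j) ∉ I} := by
        intro hmem'
        exact absurd (hI.1 _ hmem').1 (not_lt_of_ge hia)
      exact Nat.le_zero.mp (Nat.sInf_le this)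


lemma rowr_of_ne {a b : ℕ} {r : ℕ → ℕ} {i : ℕ} (h : (cset a b r i).Nonempty) :
    rowr a b r i = r (sInf (cset a b r i)) + 1 := by
  rw [rowr, dif_pos h]

lemma rowr_of_empty {a b : ℕ} {r : ℕ → ℕ} {i : ℕ} (h : ¬ (cset a b r i).Nonempty) :
    rowr a b r i = 0 := by
  rw [rowr, dif_neg h]

lemma rowr_pos {a b : ℕ} {r : ℕ → ℕ} {i : ℕ} (h : 0 < rowr a b r i) :
    (cset a b r i).Nonempty := by
  by_contra hc
  rw [rowr_of_empty hc] at h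
  exact lt_irrefl 0 h

lemma good_rowr {a b : ℕ} {r : ℕ → ℕ} (h : Good a b r) : Good a b (rowr a b r) := by
  refine ⟨?_, ?_, ?_⟩
  · intro i
    by_cases h1 : (cset a b r (i + 1)).Nonempty
    · have h0 : (cset a b r i).Nonempty := by
        obtain ⟨k, hk1, hk2⟩ := h1
        exact ⟨k, le_trans (Nat.le_succ i) hk1, hk2⟩
      rw [rowr_of_ne h1, rowr_of_ne h0]
      have hle : sInf (cset a b r i) ≤ sInf (cset a b r (i + 1)) := by
        apply Nat.sInf_le
        have := Nat.sInf_mem h1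
        exact ⟨le_trans (Nat.le_succ i) this.1, this.2⟩
      exact Nat.succ_le_succ (h.anti hle)
    · rw [rowr_of_empty h1]
      exact Nat.zero_le _
  · intro i
    by_cases h1 : (cset a b r i).Nonempty
    · rw [rowr_of_ne h1]
      exact (Nat.sInf_mem h1).2.2.1
    · rw [rowr_of_empty h1]; exact Nat.zero_le _
  · intro i hia
    apply rowr_of_empty
    rintro ⟨k, hk1, hk2⟩
    exact absurd hk2.1 (not_lt_of_ge (le_trans hia hk1))

/-- characterization of minimal elements of the complement -/
lemma min_char {a b : ℕ} {r : ℕ → ℕ} (hG : Good a b r) (q : ℕ × ℕ) :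
    ((IsCell a b q ∧ q ∉ toSet a r) ∧
      ∀ t, IsCell a b t → t ∉ toSet a r → t ≤ q → t = q) ↔
    Corner a b r q.1 ∧ q.2 = r q.1 := by
  obtain ⟨x, y⟩ := q
  constructor
  · rintro ⟨⟨⟨hxa, hyb⟩, hnotin⟩, hmin⟩
    have hyr : r x ≤ y := by
      by_contra hc
      push_neg at hc
      exact hnotin ⟨hxa, hc⟩
    have hy : y = r x := by
      have hcell : IsCell a b (x, r x) := ⟨hxa, lt_of_le_of_lt hyr hyb⟩
      have := hmin (x, r x) hcell (fun hmem => absurd hmem.2 (lt_irrefl _))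
        (Prod.mk_le_mk.mpr ⟨le_refl x, hyr⟩)
      exact (congrArg Prod.snd this).symm
    subst hy
    refine ⟨⟨hxa, hyb, ?_⟩, rfl⟩
    rcases Nat.eq_zero_or_pos x with h0 | hx0
    · exact Or.inl h0
    · right
      by_contra hc
      push_neg at hc
      have heq : r (x - 1) = r x := le_antisymm hc (hG.anti (Nat.sub_le x 1))
      have hcell : IsCell a b (x - 1, r x) := ⟨lt_of_le_of_lt (Nat.sub_le x 1) hxa, hyb⟩
      have hni : (x - 1, r x) ∉ toSet a r := fun hmem => by
        rw [mem_toSet] at hmem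
        exact absurd hmem.2 (by simp [heq])
      have := hmin _ hcell hni (Prod.mk_le_mk.mpr ⟨Nat.sub_le x 1, le_refl _⟩)
      have : x - 1 = x := congrArg Prod.fst this
      omega
  · rintro ⟨⟨hxa, hrb, hcor⟩, hy⟩
    simp only at hxa hrb hcor hy
    subst hy
    refine ⟨⟨⟨hxa, hrb⟩, fun hmem => absurd hmem.2 (lt_irrefl _)⟩, ?_⟩
    rintro ⟨u, v⟩ ⟨hua, hvb⟩ hnotin hle
    rw [Prod.mk_le_mk] at hle
    have hvr : r u ≤ v := by
      by_contra hc
      push_neg at hc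
      exact hnotin ⟨hua, hc⟩
    have hru : r x ≤ r u := hG.anti hle.1
    have hveq : v = r x := le_antisymm hle.2 (le_trans hru hvr)
    have hrueq : r u = r x := le_antisymm (le_trans hvr (le_of_eq hveq)) hru
    have hux : u = x := by
      by_contra hc
      have hux : u < x := lt_of_le_of_ne hle.1 hc
      have hx0 : x ≠ 0 := by omega
      rcases hcor with h0 | hlt
      · exact hx0 h0
      · have : r (x - 1) ≤ r u := hG.anti (by omega)
        omega
    rw [hux, hveq]

lemma mem_row_iff {a b : ℕ} {r : ℕ → ℕ} (hG : Good a b r) (p : ℕ × ℕ) :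
    p ∈ Row a b (toSet a r) ↔ ∃ k, Corner a b r k ∧ p.1 ≤ k ∧ p.2 ≤ r k := by
  constructor
  · rintro ⟨q, h1, h2, h3⟩
    have := (min_char hG q).mp ⟨h1, h2⟩
    refine ⟨q.1, this.1, ?_, ?_⟩
    · exact (Prod.le_def.mp h3).1
    · rw [← this.2]; exact (Prod.le_def.mp h3).2
  · rintro ⟨k, hcor, h1, h2⟩
    refine ⟨(k, r k), ?_, ?_, ?_⟩
    · exact (((min_char hG (k, r k)).mpr ⟨hcor, rfl⟩)).1
    · exact (((min_char hG (k, r k)).mpr ⟨hcor, rfl⟩)).2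
    · exact Prod.mk_le_mk.mpr ⟨h1, h2⟩

lemma row_toSet {a b : ℕ} {r : ℕ → ℕ} (hG : Good a b r) :
    Row a b (toSet a r) = toSet a (rowr a b r) := by
  ext ⟨i, j⟩
  rw [mem_row_iff hG, mem_toSet]
  constructor
  · rintro ⟨k, hcor, h1, h2⟩
    have hne : (cset a b r i).Nonempty := ⟨k, h1, hcor⟩
    have hsle : sInf (cset a b r i) ≤ k := Nat.sInf_le ⟨h1, hcor⟩
    have hsmem := Nat.sInf_mem hne
    refine ⟨lt_of_le_of_lt h1 hcor.1, ?_⟩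
    rw [rowr_of_ne hne]
    exact Nat.lt_succ_of_le (le_trans h2 (hG.anti hsle))
  · rintro ⟨hia, hj⟩
    have hj' : j < rowr a b r i := hj
    have hne : (cset a b r i).Nonempty := rowr_pos (Nat.pos_of_ne_zero (by omega))
    have hsmem := Nat.sInf_mem hne
    refine ⟨sInf (cset a b r i), hsmem.2, hsmem.1, ?_⟩
    rw [rowr_of_ne hne] at hj'
    omega


lemma desc_iff {a b : ℕ} {r : ℕ → ℕ} (hG : Good a b r) {p : ℕ} (hp : p < a) :
    rowr a b r (p + 1) < rowr a b r p ↔ Corner a b r p := by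
  constructor
  · intro hlt
    have hne : (cset a b r p).Nonempty := rowr_pos (Nat.pos_of_ne_zero (by omega))
    have hsmem := Nat.sInf_mem hne
    by_cases heq : sInf (cset a b r p) = p
    · rw [← heq]; exact hsmem.2
    · exfalso
      have hgt : p + 1 ≤ sInf (cset a b r p) := by
        have := hsmem.1; omega
      have hne1 : (cset a b r (p + 1)).Nonempty := ⟨sInf (cset a b r p), hgt, hsmem.2⟩
      have heq1 : sInf (cset a b r (p + 1)) = sInf (cset a b r p) := by
        apply le_antisymm
        · exact Nat.sInf_le ⟨hgt, hsmem.2⟩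
        · apply Nat.sInf_le
          have := Nat.sInf_mem hne1
          exact ⟨le_trans (Nat.le_succ p) this.1, this.2⟩
      rw [rowr_of_ne hne, rowr_of_ne hne1, heq1] at hlt
      exact lt_irrefl _ hlt
  · intro hcor
    have hne : (cset a b r p).Nonempty := ⟨p, le_refl p, hcor⟩
    have heq : sInf (cset a b r p) = p :=
      le_antisymm (Nat.sInf_le ⟨le_refl p, hcor⟩) (Nat.sInf_mem hne).1
    rw [rowr_of_ne hne, heq]
    by_cases h1 : (cset a b r (p + 1)).Nonempty
    · rw [rowr_of_ne h1]
      have hsmem := Nat.sInf_mem h1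
      have hk1 : p + 1 ≤ sInf (cset a b r (p + 1)) := hsmem.1
      have : r (sInf (cset a b r (p + 1))) < r p := by
        rcases hsmem.2.2.2 with h0 | hlt
        · omega
        · exact lt_of_lt_of_le hlt (hG.anti (by omega))
      omega
    · rw [rowr_of_empty h1]
      omega

lemma im_iff {a b : ℕ} {r : ℕ → ℕ} (hG : Good a b r) {j : ℕ} (hj : j < b) :
    (∃ i, rowr a b r i = j + 1) ↔ (∃ k, k < a ∧ r k = j) := by
  constructor
  · rintro ⟨i, hi⟩
    have hne : (cset a b r i).Nonempty := rowr_pos (by omega)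
    rw [rowr_of_ne hne] at hi
    have hsmem := Nat.sInf_mem hne
    exact ⟨sInf (cset a b r i), hsmem.2.1, by omega⟩
  · rintro ⟨k, hka, hrk⟩
    have hSne : {i | r i = j}.Nonempty := ⟨k, hrk⟩
    set m := sInf {i | r i = j} with hm
    have hmmem : r m = j := Nat.sInf_mem hSne
    have hmk : m ≤ k := Nat.sInf_le hrk
    have hcor : Corner a b r m := by
      refine ⟨by omega, by omega, ?_⟩
      rcases Nat.eq_zero_or_pos m with h0 | hm0
      · exact Or.inl h0
      · right
        have h1 : r m ≤ r (m - 1) := hG.anti (Nat.sub_le m 1)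
        rcases lt_or_eq_of_le h1 with h | h
        · exact h
        · exfalso
          have : m ≤ m - 1 := Nat.sInf_le (show r (m - 1) = j by omega)
          omega
    have hne : (cset a b r m).Nonempty := ⟨m, le_refl m, hcor⟩
    have heq : sInf (cset a b r m) = m :=
      le_antisymm (Nat.sInf_le ⟨le_refl m, hcor⟩) (Nat.sInf_mem hne).1
    exact ⟨m, by rw [rowr_of_ne hne, heq, hmmem]⟩

lemma shift {a b : ℕ} (ha : 1 ≤ a) (hb : 1 ≤ b) {r : ℕ → ℕ} (hG : Good a b r)
    {p : ℕ} (hp : p < a + b) :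
    (Wrd a (rowr a b r) p ↔ Wrd a r ((p + (a + b - 1)) % (a + b))) := by
  rcases Nat.eq_zero_or_pos p with hp0 | hppos
  · subst hp0
    have hq : (0 + (a + b - 1)) % (a + b) = a + b - 1 := by
      rw [Nat.zero_add]; exact Nat.mod_eq_of_lt (by omega)
    rw [hq]
    have h1 : Wrd a (rowr a b r) 0 ↔ Corner a b r 0 := by
      rw [Wrd, if_pos (show 0 < a from ha)]
      exact desc_iff hG (show 0 < a from ha)
    have h2 : Wrd a r (a + b - 1) ↔ ∀ k, r k ≠ b := by
      rw [Wrd, if_neg (by omega)]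
      have : a + b - 1 - a + 1 = b := by omega
      rw [this]
    rw [h1, h2, Corner]
    constructor
    · intro h k
      have : r k ≤ r 0 := hG.anti (Nat.zero_le k)
      omega
    · intro h
      have := h 0
      have := hG.2.1 0
      exact ⟨ha, by omega, Or.inl rfl⟩
  · have hq : (p + (a + b - 1)) % (a + b) = p - 1 := by
      have : p + (a + b - 1) = (p - 1) + (a + b) := by omega
      rw [this, Nat.add_mod_right]
      exact Nat.mod_eq_of_lt (by omega)
    rw [hq]
    by_cases hpa : p < a
    · have h1 : Wrd a (rowr a b r) p ↔ Corner a b r p := by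
        rw [Wrd, if_pos hpa]
        exact desc_iff hG hpa
      have h2 : Wrd a r (p - 1) ↔ r p < r (p - 1) := by
        rw [Wrd, if_pos (by omega)]
        have : p - 1 + 1 = p := by omega
        rw [this]
      rw [h1, h2, Corner]
      constructor
      · rintro ⟨_, _, h0 | hlt⟩
        · omega
        · exact hlt
      · intro h
        have := hG.2.1 (p - 1)
        exact ⟨hpa, by omega, Or.inr h⟩
    · -- a ≤ p < a + b
      have hja : a ≤ p := le_of_not_gt hpa
      set j := p - a with hjdef
      have hjb : j < b := by omega
      have h1 : Wrd a (rowr a b r) p ↔ ∀ k, rowr a b r k ≠ j + 1 := by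
        rw [Wrd, if_neg (by omega)]
      have himr : (∀ k, rowr a b r k ≠ j + 1) ↔ ∀ k, k < a → r k ≠ j := by
        constructor
        · intro h k hk hrk
          obtain ⟨i, hi⟩ := (im_iff hG hjb).mpr ⟨k, hk, hrk⟩
          exact h i hi
        · intro h i hi
          obtain ⟨k, hk, hrk⟩ := (im_iff hG hjb).mp ⟨i, hi⟩
          exact h k hk hrk
      rw [h1, himr]
      rcases Nat.eq_or_lt_of_le hja with heq | hgt
      · -- p = a, j = 0
        have hj0 : j = 0 := by omega
        have h2 : Wrd a r (p - 1) ↔ 0 < r (a - 1) := by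
          rw [Wrd, if_pos (by omega)]
          have e1 : p - 1 + 1 = a := by omega
          have e2 : p - 1 = a - 1 := by omega
          rw [e1, e2, hG.2.2 a (le_refl a)]
        rw [h2, hj0]
        constructor
        · intro h
          have := h (a - 1) (by omega)
          omega
        · intro h k hk
          have : r (a - 1) ≤ r k := hG.anti (by omega)
          omega
      · -- p > a
        have h2 : Wrd a r (p - 1) ↔ ∀ k, r k ≠ j := by
          rw [Wrd, if_neg (by omega)]
          have : p - 1 - a + 1 = j := by omega
          rw [this]
        rw [h2]
        constructor
        · intro h k
          by_cases hk : k < a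
          · exact h k hk
          · rw [hG.2.2 k (by omega)]
            omega
        · intro h k hk
          exact h k


lemma side {a b : ℕ} {r s : ℕ → ℕ} (hGr : Good a b r) (hGs : Good a b s)
    (hV1 : ∀ v, 1 ≤ v → v ≤ b → (∀ k, r k ≠ v) → (∀ k, s k ≠ v))
    {i : ℕ} (hub : ∀ k, k < i → s i < r k) : ¬ (r i < s i) := by
  intro hlt
  have h1 : 1 ≤ s i := by omega
  have h2 : s i ≤ b := hGs.2.1 i
  have h3 : ¬ (∀ k, s k ≠ s i) := fun hh => hh i rfl
  have h4 : ¬ (∀ k, r k ≠ s i) := fun hh => h3 (hV1 _ h1 h2 hh)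
  push_neg at h4
  obtain ⟨k, hk⟩ := h4
  by_cases hki : k < i
  · have := hub k hki
    omega
  · push_neg at hki
    have : r k ≤ r i := hGr.anti hki
    omega

/-- the word determines a Good function -/
lemma recon {a b : ℕ} (ha : 1 ≤ a) {r s : ℕ → ℕ} (hG : Good a b r) (hG' : Good a b s)
    (h : ∀ p, p < a + b → (Wrd a r p ↔ Wrd a s p)) : r = s := by
  have hV : ∀ v, 1 ≤ v → v ≤ b → ((∀ k, r k ≠ v) ↔ (∀ k, s k ≠ v)) := by
    intro v h1 h2
    have hp := h (a + v - 1) (by omega)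
    rw [Wrd, Wrd, if_neg (by omega), if_neg (by omega)] at hp
    have he : a + v - 1 - a + 1 = v := by omega
    rw [he] at hp
    exact hp
  have hD : ∀ p, p < a → (r (p + 1) < r p ↔ s (p + 1) < s p) := by
    intro p hpa
    have hp := h p (by omega)
    rw [Wrd, Wrd, if_pos hpa, if_pos hpa] at hp
    exact hp
  have hV1 : ∀ v, 1 ≤ v → v ≤ b → (∀ k, r k ≠ v) → (∀ k, s k ≠ v) :=
    fun v h1 h2 => (hV v h1 h2).mp
  have hV2 : ∀ v, 1 ≤ v → v ≤ b → (∀ k, s k ≠ v) → (∀ k, r k ≠ v) :=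
    fun v h1 h2 => (hV v h1 h2).mpr
  funext i
  induction i using Nat.strong_induction_on with
  | _ i IH =>
    by_cases hia : a ≤ i
    · rw [hG.2.2 i hia, hG'.2.2 i hia]
    · push_neg at hia
      match i with
      | 0 =>
        have n1 : ¬ (r 0 < s 0) := side hG hG' hV1 (fun k hk => absurd hk (Nat.not_lt_zero k))
        have n2 : ¬ (s 0 < r 0) := side hG' hG hV2 (fun k hk => absurd hk (Nat.not_lt_zero k))
        omega
      | m + 1 =>
        have hm : r m = s m := IH m (Nat.lt_succ_self m)
        by_cases hd : r (m + 1) < r m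
        · have hd' : s (m + 1) < s m := (hD m (by omega)).mp hd
          have n1 : ¬ (r (m + 1) < s (m + 1)) := by
            apply side hG hG' hV1
            intro k hk
            have h5 : r m ≤ r k := hG.anti (by omega)
            omega
          have n2 : ¬ (s (m + 1) < r (m + 1)) := by
            apply side hG' hG hV2
            intro k hk
            have h5 : s m ≤ s k := hG'.anti (by omega)
            omega
          omega
        · have hd' : ¬ (s (m + 1) < s m) := fun hh => hd ((hD m (by omega)).mpr hh)
          have e1 : r (m + 1) = r m := le_antisymm (hG.1 m) (le_of_not_gt hd)
          have e2 : s (m + 1) = s m := le_antisymm (hG'.1 m) (le_of_not_gt hd')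
          omega


lemma good_iter {a b : ℕ} {r : ℕ → ℕ} (hG : Good a b r) (m : ℕ) :
    Good a b ((rowr a b)^[m] r) := by
  induction m with
  | zero => exact hG
  | succ m IH => rw [Function.iterate_succ_apply']; exact good_rowr IH

lemma row_iter {a b : ℕ} {r : ℕ → ℕ} (hG : Good a b r) (m : ℕ) :
    (Row a b)^[m] (toSet a r) = toSet a ((rowr a b)^[m] r) := by
  induction m with
  | zero => rfl
  | succ m IH =>
    rw [Function.iterate_succ_apply', Function.iterate_succ_apply', IH]
    exact row_toSet (good_iter hG m)

lemma iter_shift {a b : ℕ} (ha : 1 ≤ a) (hb : 1 ≤ b) {r : ℕ → ℕ} (hG : Good a b r)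
    (m : ℕ) : ∀ p, p < a + b →
    (Wrd a ((rowr a b)^[m] r) p ↔ Wrd a r ((p + m * (a + b - 1)) % (a + b))) := by
  induction m with
  | zero =>
    intro p hp
    rw [Nat.zero_mul, Nat.add_zero, Nat.mod_eq_of_lt hp]
    rfl
  | succ m IH =>
    intro p hp
    rw [Function.iterate_succ_apply']
    have step := shift ha hb (good_iter hG m) hp
    rw [step]
    have hlt : (p + (a + b - 1)) % (a + b) < a + b := Nat.mod_lt _ (by omega)
    rw [IH _ hlt, Nat.mod_add_mod]
    have he : p + (a + b - 1) + m * (a + b - 1) = p + (m + 1) * (a + b - 1) := by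
      ring
    rw [he]

lemma rowr_period {a b : ℕ} (ha : 1 ≤ a) (hb : 1 ≤ b) {r : ℕ → ℕ} (hG : Good a b r) :
    (rowr a b)^[a + b] r = r := by
  apply recon ha (good_iter hG (a + b)) hG
  intro p hp
  rw [iter_shift ha hb hG (a + b) p hp]
  have he : (p + (a + b) * (a + b - 1)) % (a + b) = p := by
    rw [Nat.add_mul_mod_self_left, Nat.mod_eq_of_lt hp]
  rw [he]

end Pf18

theorem stmt18 (a b : ℕ) (ha : 1 ≤ a) (hb : 1 ≤ b) :
    ∀ I : Set (ℕ × ℕ), IsIdeal a b I → (Row a b)^[a + b] I = I := by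
  intro I hI
  obtain ⟨hIe, hG⟩ := Pf18.ideal_eq_toSet hI
  rw [hIe, Pf18.row_iter hG, Pf18.rowr_period ha hb hG]
end

section
/- Let a, b ≥ 1 and let T be an increasing tableau of shape a×b with entries at most a+b. Then T is packed with maximum entry exactly a+b if and only if there exists an antidiagonal value c such that some cell (i,j) with i+j = c has T(i,j) = i+j and some cell (i',j') with i'+j' = c has T(i',j') = i'+j'−1. -/
open Polynomial

theorem stmt19 (a b : ℕ) (ha : 1 ≤ a) (hb : 1 ≤ b) :
    ∀ T : ℕ → ℕ → ℕ, IsInc a b (a + b) T →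
      (IsPacked a b (a + b) T ↔
        ∃ i j i' j', i < a ∧ j < b ∧ i' < a ∧ j' < b ∧ i + j = i' + j' ∧
          T i j = i + j + 2 ∧ T i' j' = i' + j' + 1) := by
  intro T hT
  obtain ⟨hbd, hrow, hcol, hz⟩ := hT
  -- lower bound: T i j ≥ i + j + 1
  have h0 : ∀ i, i < a → i + 1 ≤ T i 0 := by
    intro i
    induction i with
    | zero => intro h; exact (hbd 0 0 h hb).1
    | succ n ih =>
      intro h
      have h1 := hcol n (n + 1) 0 (Nat.lt_succ_self n) h hb
      have h2 := ih (by omega)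
      omega
  have hlow : ∀ i j, i < a → j < b → i + j + 1 ≤ T i j := by
    intro i j hi
    induction j with
    | zero => intro _; simpa using h0 i hi
    | succ n ih =>
      intro h
      have h1 := hrow i n (n + 1) hi (Nat.lt_succ_self n) h
      have h2 := ih (by omega)
      omega
  -- monotone increments
  have hrowm : ∀ i j d, i < a → j + d < b → T i j + d ≤ T i (j + d) := by
    intro i j d hi
    induction d with
    | zero => intro _; simp
    | succ n ih =>
      intro h
      show T i j + (n + 1) ≤ T i (j + n + 1)
      have h1 := hrow i (j + n) (j + n + 1) hi (by omega) (by omega)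
      have h2 := ih (by omega)
      omega
  have hcolm : ∀ i j d, i + d < a → j < b → T i j + d ≤ T (i + d) j := by
    intro i j d hj
    induction d with
    | zero => intro _; simp
    | succ n ih =>
      intro h
      show T i j + (n + 1) ≤ T (i + n + 1) j
      have h1 := hcol (i + n) (i + n + 1) j (by omega) (by omega) h
      have h2 := ih (by omega) h
      omega
  -- upper bound: T i j ≤ i + j + 2
  have hup : ∀ i j, i < a → j < b → T i j ≤ i + j + 2 := by
    intro i j hi hj
    have h1 := hrowm i j (b - 1 - j) hi (by omega)
    rw [show j + (b - 1 - j) = b - 1 from by omega] at h1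
    have h2 := hcolm i (b - 1) (a - 1 - i) (by omega) (by omega)
    rw [show i + (a - 1 - i) = a - 1 from by omega] at h2
    have h3 := (hbd (a - 1) (b - 1) (by omega) (by omega)).2
    omega
  -- diagonal value predicates
  set P : ℕ → Prop := fun c => ∃ i j, i < a ∧ j < b ∧ i + j = c ∧ T i j = c + 1 with hP
  set Q : ℕ → Prop := fun c => ∃ i j, i < a ∧ j < b ∧ i + j = c ∧ T i j = c + 2 with hQ
  have Pstep : ∀ c, P (c + 1) → P c := by
    rintro c ⟨i, j, hi, hj, hd, hv⟩
    by_cases hi0 : 0 < i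
    · have h1 := hcol (i - 1) i j (by omega) hi hj
      have h2 := hlow (i - 1) j (by omega) hj
      exact ⟨i - 1, j, by omega, hj, by omega, by omega⟩
    · have hj0 : 0 < j := by omega
      have h1 := hrow i (j - 1) j hi (by omega) hj
      have h2 := hlow i (j - 1) hi (by omega)
      exact ⟨i, j - 1, hi, by omega, by omega, by omega⟩
  have Qstep : ∀ c, Q c → c + 3 ≤ a + b → Q (c + 1) := by
    rintro c ⟨i, j, hi, hj, hd, hv⟩ hc
    by_cases hi1 : i + 1 < a
    · have h1 := hcol i (i + 1) j (Nat.lt_succ_self i) hi1 hj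
      have h2 := hup (i + 1) j hi1 hj
      exact ⟨i + 1, j, hi1, hj, by omega, by omega⟩
    · have hj1 : j + 1 < b := by omega
      have h1 := hrow i j (j + 1) hi (Nat.lt_succ_self j) hj1
      have h2 := hup i (j + 1) hi hj1
      exact ⟨i, j + 1, hi, hj1, by omega, by omega⟩
  have Pdown : ∀ n c, P (c + n) → P c := by
    intro n
    induction n with
    | zero => intro c h; exact h
    | succ n ih => intro c h; exact ih c (Pstep (c + n) h)
  have Qup : ∀ n c, Q c → c + n + 2 ≤ a + b → Q (c + n) := by
    intro n
    induction n with
    | zero => intro c h _; exact h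
    | succ n ih =>
      intro c h hc
      exact Qstep (c + n) (ih c h (by omega)) (by omega)
  constructor
  · intro hp
    by_contra hne
    have hPQ : ∀ c, P c → Q c → False := by
      rintro c ⟨i', j', hi', hj', hd', hv'⟩ ⟨i, j, hi, hj, hd, hv⟩
      exact hne ⟨i, j, i', j', hi, hj, hi', hj', by omega, by omega, by omega⟩
    have hPall : ∀ c, c + 2 ≤ a + b → P c := by
      intro c
      induction c with
      | zero =>
        intro _
        obtain ⟨i, j, hi, hj, hv⟩ := hp 1 le_rfl (by omega)
        have h1 := hlow i j hi hj
        exact ⟨i, j, hi, hj, by omega, by omega⟩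
      | succ n ih =>
        intro h
        obtain ⟨i, j, hi, hj, hv⟩ := hp (n + 2) (by omega) (by omega)
        have hl := hlow i j hi hj
        have hu := hup i j hi hj
        by_cases hc : i + j = n + 1
        · exact ⟨i, j, hi, hj, hc, by omega⟩
        · exact absurd (⟨i, j, hi, hj, by omega, by omega⟩ : Q n)
            (fun hq => hPQ n (ih (by omega)) hq)
    obtain ⟨i, j, hi, hj, hv⟩ := hp (a + b) (by omega) le_rfl
    have hl := hlow i j hi hj
    have hu := hup i j hi hj
    have hij : i + j = a + b - 2 := by omega
    exact hPQ (a + b - 2) (hPall (a + b - 2) (by omega))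
      ⟨i, j, hi, hj, hij, by omega⟩
  · rintro ⟨i, j, i', j', hi, hj, hi', hj', hd, hv, hv'⟩
    have hPc : P (i + j) := ⟨i', j', hi', hj', by omega, by omega⟩
    have hQc : Q (i + j) := ⟨i, j, hi, hj, rfl, hv⟩
    have hub := hup i j hi hj
    intro v hv1 hv2
    by_cases hcase : v ≤ i + j + 1
    · have h := Pdown (i + j - (v - 1)) (v - 1)
      rw [show v - 1 + (i + j - (v - 1)) = i + j from by omega] at h
      obtain ⟨i₀, j₀, h1, h2, h3, h4⟩ := h hPc
      exact ⟨i₀, j₀, h1, h2, by omega⟩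
    · have h := Qup (v - 2 - (i + j)) (i + j) hQc (by omega)
      rw [show i + j + (v - 2 - (i + j)) = v - 2 from by omega] at h
      obtain ⟨i₀, j₀, h1, h2, h3, h4⟩ := h
      exact ⟨i₀, j₀, h1, h2, by omega⟩
end
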